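/- arXiv:2604.03718 — 9 statements merged into one kernel-verified Lean document; each statement's English description precedes it below -/
import Mathlib

section
/- Let G be a connected finite simple graph with shortest-path distance d, and let x_0, x_1, …, x_k be vertices with x_{i} ≠ x_{i+1} for all 0 ≤ i ≤ k−1, such that every consecutive triple is geodesic, i.e. d(x_{i−1}, x_{i+1}) = d(x_{i−1}, x_i) + d(x_i, x_{i+1}) for all 1 ≤ i ≤ k−1, but the whole chain is not geodesic, i.e. d(x_0, x_1) + d(x_1, x_2) + ⋯ + d(x_{k−1}, x_k) > d(x_0, x_k). Then there exist indices a and b with a + 1 < b and b + 1 ≤ k such that the quadruple (x_a, x_{a+1}, x_b, x_{b+1}) is a 4-cut: x_{a+1} ≠ x_b, d(x_a, x_b) = d(x_a, x_{a+1}) + d(x_{a+1}, x_b), d(x_{a+1}, x_{b+1}) = d(x_{a+1}, x_b) + d(x_b, x_{b+1}), and d(x_a, x_{b+1}) < d(x_a, x_{a+1}) + d(x_{a+1}, x_b) + d(x_b, x_{b+1}). -/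
private lemma dist_le_sum_aux {V : Type*} (G : SimpleGraph V) (hconn : G.Connected)
    (x : ℕ → V) (i : ℕ) : ∀ j, i ≤ j →
    G.dist (x i) (x j) ≤ ∑ l ∈ Finset.Ico i j, G.dist (x l) (x (l + 1)) := by
  intro j
  induction j with
  | zero => intro h; simp [Nat.le_zero.mp h]
  | succ n ih =>
    intro h
    rcases Nat.lt_or_ge i (n + 1) with h' | h'
    · have hin : i ≤ n := Nat.lt_succ_iff.mp h'
      rw [Finset.sum_Ico_succ_top hin]
      calc G.dist (x i) (x (n + 1)) ≤ G.dist (x i) (x n) + G.dist (x n) (x (n + 1)) :=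
            hconn.dist_triangle
        _ ≤ _ := by gcongr; exact ih hin
    · have : i = n + 1 := le_antisymm h h'
      simp [this]

/-- **Existence of a 4-cut.** Let `G` be a connected finite simple graph with
shortest-path distance `d = G.dist`, and let `x 0, x 1, …, x k` be vertices with
consecutive vertices distinct, such that every consecutive triple is geodesic
(`d(x i, x (i+2)) = d(x i, x (i+1)) + d(x (i+1), x (i+2))` for `i + 2 ≤ k`), but
the whole chain is not geodesic (the total length exceeds `d(x 0, x k)`).
Then some quadruple `(x a, x (a+1), x b, x (b+1))` with `a + 1 < b` and `b + 1 ≤ k`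
is a 4-cut. -/
theorem exists_four_cut {V : Type*} [Fintype V] (G : SimpleGraph V)
    (hconn : G.Connected) (k : ℕ) (x : ℕ → V)
    (hproper : ∀ i < k, x i ≠ x (i + 1))
    (htriple : ∀ i, i + 2 ≤ k →
      G.dist (x i) (x (i + 2)) = G.dist (x i) (x (i + 1)) + G.dist (x (i + 1)) (x (i + 2)))
    (hnotgeod : G.dist (x 0) (x k) < ∑ i ∈ Finset.range k, G.dist (x i) (x (i + 1))) :
    ∃ a b : ℕ, a + 1 < b ∧ b + 1 ≤ k ∧
      x (a + 1) ≠ x b ∧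
      G.dist (x a) (x b) = G.dist (x a) (x (a + 1)) + G.dist (x (a + 1)) (x b) ∧
      G.dist (x (a + 1)) (x (b + 1)) = G.dist (x (a + 1)) (x b) + G.dist (x b) (x (b + 1)) ∧
      G.dist (x a) (x (b + 1)) <
        G.dist (x a) (x (a + 1)) + G.dist (x (a + 1)) (x b) + G.dist (x b) (x (b + 1)) := by
  set S : ℕ → ℕ → ℕ := fun i j => ∑ l ∈ Finset.Ico i j, G.dist (x l) (x (l + 1)) with hS
  have hle : ∀ i j, i ≤ j → G.dist (x i) (x j) ≤ S i j :=
    fun i j h => dist_le_sum_aux G hconn x i j h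
  have hself : ∀ i, S i i = 0 := fun i => by simp [hS]
  have hbot : ∀ i j, i < j → S i j = G.dist (x i) (x (i + 1)) + S (i + 1) j :=
    fun i j h => Finset.sum_eq_sum_Ico_succ_bot h _
  have htop : ∀ i j, i ≤ j → S i (j + 1) = S i j + G.dist (x j) (x (j + 1)) :=
    fun i j h => Finset.sum_Ico_succ_top h _
  -- main claim by strong induction on chain length
  have main : ∀ m i j, j ≤ k → j = i + m → G.dist (x i) (x j) < S i j →
      ∃ a b : ℕ, a + 1 < b ∧ b + 1 ≤ k ∧
      x (a + 1) ≠ x b ∧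
      G.dist (x a) (x b) = G.dist (x a) (x (a + 1)) + G.dist (x (a + 1)) (x b) ∧
      G.dist (x (a + 1)) (x (b + 1)) = G.dist (x (a + 1)) (x b) + G.dist (x b) (x (b + 1)) ∧
      G.dist (x a) (x (b + 1)) <
        G.dist (x a) (x (a + 1)) + G.dist (x (a + 1)) (x b) + G.dist (x b) (x (b + 1)) := by
    intro m
    induction m using Nat.strong_induction_on with
    | _ m IH =>
      intro i j hjk hji hfail
      rcases m with _ | _ | _ | m
      · -- m = 0
        rw [show j = i from by omega] at hfail
        have := hself i
        omega
      · -- m = 1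
        rw [show j = i + 1 from by omega] at hfail
        have h1 := htop i i le_rfl
        have h0 := hself i
        omega
      · -- m = 2
        rw [show j = i + 2 from by omega] at hfail
        have h2 := htriple i (by omega)
        have e1 : S i (i + 1 + 1) = S i (i + 1) + G.dist (x (i + 1)) (x (i + 1 + 1)) :=
          htop i (i + 1) (by omega)
        have e2 := htop i i le_rfl
        have e0 := hself i
        have : i + 1 + 1 = i + 2 := rfl
        rw [this] at e1
        omega
      · -- m + 3
        -- set b so that j = b + 1
        have hb : j = (i + m + 2) + 1 := by omega
        set b := i + m + 2 with hbdef
        subst hb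
        have hsplit1 : S i (b + 1) = G.dist (x i) (x (i + 1)) + S (i + 1) (b + 1) :=
          hbot i (b + 1) (by omega)
        have hsplit2 : S i (b + 1) = S i b + G.dist (x b) (x (b + 1)) :=
          htop i b (by omega)
        by_cases h1 : G.dist (x i) (x b) < S i b
        · exact IH (m + 2) (by omega) i b (by omega) (by omega) h1
        by_cases h2 : G.dist (x (i + 1)) (x (b + 1)) < S (i + 1) (b + 1)
        · exact IH (m + 2) (by omega) (i + 1) (b + 1) (by omega) (by omega) h2
        push_neg at h1 h2
        have he1 : G.dist (x i) (x b) = S i b := le_antisymm (hle _ _ (by omega)) h1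
        have he2 : G.dist (x (i + 1)) (x (b + 1)) = S (i + 1) (b + 1) :=
          le_antisymm (hle _ _ (by omega)) h2
        have hsplit3 : S i b = G.dist (x i) (x (i + 1)) + S (i + 1) b :=
          hbot i b (by omega)
        have hsplit4 : S (i + 1) (b + 1) = S (i + 1) b + G.dist (x b) (x (b + 1)) :=
          htop (i + 1) b (by omega)
        have hinner : G.dist (x (i + 1)) (x b) = S (i + 1) b := by
          have htri : G.dist (x i) (x b) ≤
              G.dist (x i) (x (i + 1)) + G.dist (x (i + 1)) (x b) := hconn.dist_triangle
          have hle' := hle (i + 1) b (by omega)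
          omega
        refine ⟨i, b, by omega, by omega, ?_, by omega, by omega, by omega⟩
        -- x (i+1) ≠ x b
        intro heq
        have hz : G.dist (x (i + 1)) (x b) = 0 := by rw [heq, SimpleGraph.dist_self]
        have hpos : 0 < S (i + 1) b := by
          rw [hS]
          apply Finset.sum_pos
          · intro l hl
            simp only [Finset.mem_Ico] at hl
            exact hconn.pos_dist_of_ne (hproper l (by omega))
          · exact ⟨i + 1, by simp; omega⟩
        omega
  refine main k 0 k le_rfl (by omega) ?_
  rw [Finset.range_eq_Ico] at hnotgeod
  exact hnotgeod
end

section
/- Let G be a finite connected vertex-transitive simple graph (for all vertices u, v there is a graph automorphism of G sending u to v), with vertex set V and shortest-path distance d. Over the field ℚ(q) = RatFunc ℚ, the zeta matrix Z(q) indexed by V with entries q^{d(x,y)} is invertible, and for every vertex g the sum of all entries of Z(q)⁻¹ multiplied by Σ_{x ∈ V} q^{d(g,x)} equals #V; equivalently, the magnitude of G equals #V / Σ_{x ∈ V} q^{d(g,x)}. -/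
open Matrix

/-- The zeta matrix of a finite graph over `ℚ(q)`: entries `q ^ d(x, y)`. -/
noncomputable def zetaMatrix {V : Type*} [Fintype V] (G : SimpleGraph V) :
    Matrix V V (RatFunc ℚ) :=
  Matrix.of fun x y => (RatFunc.X : RatFunc ℚ) ^ G.dist x y

lemma iso_dist_le {V : Type*} {G : SimpleGraph V} (hconn : G.Connected)
    (φ : G ≃g G) (u v : V) : G.dist (φ u) (φ v) ≤ G.dist u v := by
  obtain ⟨p, hp⟩ := hconn.exists_walk_length_eq_dist u v
  calc G.dist (φ u) (φ v) ≤ (p.map φ.toHom).length := SimpleGraph.dist_le _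
    _ = G.dist u v := by rw [SimpleGraph.Walk.length_map, hp]

lemma iso_dist {V : Type*} {G : SimpleGraph V} (hconn : G.Connected)
    (φ : G ≃g G) (u v : V) : G.dist (φ u) (φ v) = G.dist u v := by
  refine le_antisymm (iso_dist_le hconn φ u v) ?_
  have := iso_dist_le hconn φ.symm (φ u) (φ v)
  simpa using this

/-- **Magnitude of a vertex-transitive graph.** Let `G` be a finite connected
vertex-transitive simple graph.  Then the zeta matrix `Z(q) = (q^{d(x,y)})` is
invertible over `ℚ(q)`, and for every vertex `g`, the magnitude
`Mag(G) = Σ_{x,y} Z(q)⁻¹ x y` satisfies `Mag(G) · Σ_{x} q^{d(g,x)} = #V`. -/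
theorem magnitude_vertexTransitive {V : Type*} [Fintype V] [DecidableEq V]
    (G : SimpleGraph V) (hconn : G.Connected)
    (htrans : ∀ u v : V, ∃ φ : G ≃g G, φ u = v) :
    IsUnit (zetaMatrix G).det ∧
      ∀ g : V,
        (∑ x : V, ∑ y : V, (zetaMatrix G)⁻¹ x y) *
            (∑ x : V, (RatFunc.X : RatFunc ℚ) ^ G.dist g x) =
          (Fintype.card V : RatFunc ℚ) := by
  classical
  -- The zeta matrix comes from a polynomial matrix
  set Zp : Matrix V V (Polynomial ℚ) :=
    Matrix.of fun x y => (Polynomial.X : Polynomial ℚ) ^ G.dist x y with hZp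
  have hmap : zetaMatrix G = Zp.map (algebraMap (Polynomial ℚ) (RatFunc ℚ)) := by
    ext x y
    show (RatFunc.X : RatFunc ℚ) ^ G.dist x y = algebraMap (Polynomial ℚ) (RatFunc ℚ) (Polynomial.X ^ G.dist x y)
    rw [map_pow, RatFunc.algebraMap_X]
  -- det of polynomial matrix evaluated at 0 is 1
  have heval : (Zp.det).eval 0 = 1 := by
    have : Zp.map (Polynomial.evalRingHom (0 : ℚ)) = (1 : Matrix V V ℚ) := by
      ext x y
      by_cases h : x = y
      · subst h; simp [Zp, SimpleGraph.dist_self]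
      · have hd : G.dist x y ≠ 0 := by
          rw [ne_eq, hconn.dist_eq_zero_iff]; exact h
        simp [Zp, Matrix.one_apply_ne h, zero_pow hd]
    calc (Zp.det).eval 0 = (Polynomial.evalRingHom (0 : ℚ)) Zp.det := rfl
      _ = (Zp.map (Polynomial.evalRingHom (0 : ℚ))).det := by
          rw [← RingHom.mapMatrix_apply, ← RingHom.map_det]
      _ = 1 := by rw [this, Matrix.det_one]
  have hdetp : Zp.det ≠ 0 := fun h => by simp [h] at heval
  have hdet : (zetaMatrix G).det ≠ 0 := by
    rw [hmap, ← RingHom.mapMatrix_apply, ← RingHom.map_det]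
    intro h
    exact hdetp (RatFunc.algebraMap_injective ℚ (by simpa using h))
  have hunit : IsUnit (zetaMatrix G).det := isUnit_iff_ne_zero.mpr hdet
  refine ⟨hunit, fun g => ?_⟩
  -- row sums are constant
  have hrow : ∀ u v : V, (∑ x : V, (RatFunc.X : RatFunc ℚ) ^ G.dist u x) =
      ∑ x : V, (RatFunc.X : RatFunc ℚ) ^ G.dist v x := by
    intro u v
    obtain ⟨φ, hφ⟩ := htrans u v
    calc (∑ x : V, (RatFunc.X : RatFunc ℚ) ^ G.dist u x)
        = ∑ x : V, (RatFunc.X : RatFunc ℚ) ^ G.dist (φ u) (φ x) := by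
          simp_rw [iso_dist hconn]
      _ = ∑ x : V, (RatFunc.X : RatFunc ℚ) ^ G.dist v x := by
          rw [hφ]
          exact Fintype.sum_equiv φ.toEquiv _ _ (fun x => rfl)
  set s : RatFunc ℚ := ∑ x : V, (RatFunc.X : RatFunc ℚ) ^ G.dist g x with hs
  -- Z *ᵥ 1 = s • 1
  have hmul : (zetaMatrix G) *ᵥ (fun _ => (1 : RatFunc ℚ)) = fun _ => s := by
    funext u
    simp only [Matrix.mulVec, dotProduct, mul_one]
    exact hrow u g
  have hinv : (zetaMatrix G)⁻¹ *ᵥ ((zetaMatrix G) *ᵥ (fun _ => (1 : RatFunc ℚ)))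
      = fun _ => (1 : RatFunc ℚ) := by
    rw [Matrix.mulVec_mulVec, Matrix.nonsing_inv_mul _ hunit, Matrix.one_mulVec]
  rw [hmul] at hinv
  have key : ∀ x : V, (∑ y : V, (zetaMatrix G)⁻¹ x y) * s = 1 := by
    intro x
    have := congrFun hinv x
    simp only [Matrix.mulVec, dotProduct] at this
    rw [Finset.sum_mul]
    exact this
  calc (∑ x : V, ∑ y : V, (zetaMatrix G)⁻¹ x y) * s
      = ∑ x : V, (∑ y : V, (zetaMatrix G)⁻¹ x y) * s := by rw [Finset.sum_mul]
    _ = ∑ x : V, (1 : RatFunc ℚ) := Finset.sum_congr rfl fun x _ => key x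
    _ = (Fintype.card V : RatFunc ℚ) := by simp
end

section
/- Let 𝒜 be a central hyperplane arrangement with N hyperplanes. Over ℚ(q) = RatFunc ℚ, the matrix W, indexed by the chambers of 𝒜, whose (σ,τ) entry is q^{−d(σ,τ)} (the inverse of q^{d(σ,τ)} in the field ℚ(q)), is invertible, and the sum of all entries of W⁻¹ equals q^N · Mag(𝒜). Equivalently, Mag(𝒜, q^{−1}) = q^N · Mag(𝒜, q). -/
open Matrix

noncomputable section

variable {E : Type*} [AddCommGroup E] [Module ℝ E]

/-- A sign vector `σ : ι → SignType` is a chamber of the arrangement `α` if it takes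
values in `{+1, -1}` and is realizable by some point. -/
def IsChamber {ι : Type*} (α : ι → (E →ₗ[ℝ] ℝ)) (σ : ι → SignType) : Prop :=
  (∀ i, σ i ≠ 0) ∧ ∃ x : E, ∀ i, (σ i : ℝ) * α i x > 0

/-- The type of chambers of the arrangement `α`. -/
def Chamber {ι : Type*} (α : ι → (E →ₗ[ℝ] ℝ)) : Type _ :=
  {σ : ι → SignType // IsChamber α σ}

noncomputable instance chamberFintype {ι : Type*} [Fintype ι] (α : ι → (E →ₗ[ℝ] ℝ)) :
    Fintype (Chamber α) :=
  have : Finite (Chamber α) := Subtype.finite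
  Fintype.ofFinite _

noncomputable instance chamberDecEq {ι : Type*} (α : ι → (E →ₗ[ℝ] ℝ)) :
    DecidableEq (Chamber α) := Classical.decEq _

/-- Hamming distance between two sign vectors. -/
def cdist {ι : Type*} [Fintype ι] (σ τ : ι → SignType) : ℕ :=
  (Finset.univ.filter fun i => σ i ≠ τ i).card

/-- The `q`-Varchenko matrix of the arrangement, over `ℚ(q)`. -/
def varchenko {ι : Type*} [Fintype ι] (α : ι → (E →ₗ[ℝ] ℝ)) :
    Matrix (Chamber α) (Chamber α) (RatFunc ℚ) :=
  Matrix.of fun σ τ => (RatFunc.X : RatFunc ℚ) ^ cdist σ.1 τ.1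

/-- The magnitude of the arrangement: the sum of all entries of the inverse of the
Varchenko matrix. -/
def Mag {ι : Type*} [Fintype ι] (α : ι → (E →ₗ[ℝ] ℝ)) : RatFunc ℚ :=
  ∑ σ : Chamber α, ∑ τ : Chamber α, (varchenko α)⁻¹ σ τ

/-- A sign vector `F : ι → SignType` is a face of the arrangement `α` if it is realizable. -/
def IsFace {ι : Type*} (α : ι → (E →ₗ[ℝ] ℝ)) (F : ι → SignType) : Prop :=
  ∃ x : E, ∀ i, SignType.sign (α i x) = F i

/-- The type of faces of the arrangement `α`. -/
def Face {ι : Type*} (α : ι → (E →ₗ[ℝ] ℝ)) : Type _ :=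
  {F : ι → SignType // IsFace α F}

noncomputable instance faceFintype {ι : Type*} [Fintype ι] (α : ι → (E →ₗ[ℝ] ℝ)) :
    Fintype (Face α) :=
  have : Finite (Face α) := Subtype.finite
  Fintype.ofFinite _

/-- The set of hyperplanes containing the face `F`. -/
def zeroSet {ι : Type*} [Fintype ι] (F : ι → SignType) : Finset ι :=
  Finset.univ.filter fun i => F i = 0

/-- The codimension of a face: the codimension of the intersection of the hyperplanes
containing it. -/
def codim {ι : Type*} (α : ι → (E →ₗ[ℝ] ℝ)) (F : ι → SignType) : ℕ :=
  Module.finrank ℝ E -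
    Module.finrank ℝ (⨅ i ∈ {i | F i = 0}, LinearMap.ker (α i) : Submodule ℝ E)

/-- The rank of the arrangement. -/
def arrRank {ι : Type*} (α : ι → (E →ₗ[ℝ] ℝ)) : ℕ :=
  Module.finrank ℝ E - Module.finrank ℝ (⨅ i, LinearMap.ker (α i) : Submodule ℝ E)


/-- The matrix with entries `q^{-d(σ,τ)}`, the inverses in `ℚ(q)` of the entries of
the Varchenko matrix. -/
def varchenkoInvEntries {ι : Type*} [Fintype ι] (α : ι → (E →ₗ[ℝ] ℝ)) :
    Matrix (Chamber α) (Chamber α) (RatFunc ℚ) :=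
  Matrix.of fun σ τ => ((RatFunc.X : RatFunc ℚ) ^ cdist σ.1 τ.1)⁻¹

lemma signtype_coe_neg_real (s : SignType) : ((-s : SignType) : ℝ) = -(s : ℝ) := by
  cases s <;> simp

lemma signtype_ne_neg_iff {s t : SignType} (hs : s ≠ 0) (ht : t ≠ 0) :
    (s ≠ -t) ↔ s = t := by
  cases s <;> cases t <;> simp_all

/-- Negation equivalence on chambers. -/
def chamberNeg {ι : Type*} (α : ι → (E →ₗ[ℝ] ℝ)) : Chamber α ≃ Chamber α where
  toFun σ := ⟨fun i => -σ.1 i, fun i => by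
      have := σ.2.1 i; cases h : σ.1 i <;> simp_all,
    by
      obtain ⟨x, hx⟩ := σ.2.2
      exact ⟨-x, fun i => by
        have := hx i
        rw [signtype_coe_neg_real, map_neg, neg_mul_neg]
        exact this⟩⟩
  invFun σ := ⟨fun i => -σ.1 i, fun i => by
      have := σ.2.1 i; cases h : σ.1 i <;> simp_all,
    by
      obtain ⟨x, hx⟩ := σ.2.2
      exact ⟨-x, fun i => by
        have := hx i
        rw [signtype_coe_neg_real, map_neg, neg_mul_neg]
        exact this⟩⟩
  left_inv σ := Subtype.ext (funext fun i => by cases h : σ.1 i <;> simp [h])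
  right_inv σ := Subtype.ext (funext fun i => by cases h : σ.1 i <;> simp [h])

lemma cdist_neg_add {ι : Type*} [Fintype ι] (σ τ : ι → SignType)
    (hσ : ∀ i, σ i ≠ 0) (hτ : ∀ i, τ i ≠ 0) :
    cdist σ (fun i => -τ i) + cdist σ τ = Fintype.card ι := by
  classical
  unfold cdist
  have h1 : (Finset.univ.filter fun i => σ i ≠ -τ i)
      = Finset.univ.filter fun i => ¬ (σ i ≠ τ i) := by
    apply Finset.filter_congr
    intro i _
    rw [signtype_ne_neg_iff (hσ i) (hτ i)]
    simp
  rw [h1, Nat.add_comm]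
  exact Finset.card_filter_add_card_filter_not _

lemma cdist_eq_zero_iff {ι : Type*} [Fintype ι] (σ τ : ι → SignType) :
    cdist σ τ = 0 ↔ σ = τ := by
  classical
  unfold cdist
  rw [Finset.card_eq_zero, Finset.filter_eq_empty_iff]
  constructor
  · intro h; funext i; have := h (Finset.mem_univ i); simpa using this
  · intro h i _; simp [h]

set_option synthInstance.maxHeartbeats 1000000 in
set_option maxHeartbeats 2000000 in
/-- **Symmetry of the magnitude of an arrangement.** Let `𝒜` be a central hyperplane
arrangement with `N` hyperplanes.  The matrix `W` with entries `q^{-d(σ,τ)}` is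
invertible over `ℚ(q)`, and the sum of all entries of `W⁻¹` equals `q^N · Mag(𝒜)`;
equivalently `Mag(𝒜, q⁻¹) = q^N · Mag(𝒜, q)`. -/
theorem mag_symmetry {ι : Type*} [Fintype ι] [FiniteDimensional ℝ E]
    (α : ι → (E →ₗ[ℝ] ℝ)) (hα : ∀ i, α i ≠ 0)
    (hker : ∀ i j, LinearMap.ker (α i) = LinearMap.ker (α j) → i = j) :
    IsUnit (varchenkoInvEntries α).det ∧
      (∑ σ : Chamber α, ∑ τ : Chamber α, (varchenkoInvEntries α)⁻¹ σ τ) =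
        (RatFunc.X : RatFunc ℚ) ^ Fintype.card ι * Mag α := by
  classical
  set V : Matrix (Chamber α) (Chamber α) (RatFunc ℚ) := varchenko α with hV
  set n : ℕ := Fintype.card ι with hn
  have hX : (RatFunc.X : RatFunc ℚ) ≠ 0 := RatFunc.X_ne_zero
  have hXn : (RatFunc.X : RatFunc ℚ) ^ n ≠ 0 := pow_ne_zero _ hX
  -- det V is a unit
  have hdV : IsUnit V.det := by
    set M : Matrix (Chamber α) (Chamber α) (Polynomial ℚ) :=
      Matrix.of fun σ τ => Polynomial.X ^ cdist σ.1 τ.1 with hM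
    have hmap : V = M.map (algebraMap (Polynomial ℚ) (RatFunc ℚ)) := by
      ext σ τ
      simp [hV, varchenko, hM, Matrix.map_apply, map_pow, RatFunc.algebraMap_X]
    have hMeval : M.map (Polynomial.evalRingHom (0 : ℚ)) = (1 : Matrix _ _ ℚ) := by
      ext σ τ
      by_cases hst : σ = τ
      · subst hst
        have : cdist σ.1 σ.1 = 0 := (cdist_eq_zero_iff _ _).2 rfl
        simp [hM, Matrix.map_apply, this]
      · have hd : cdist σ.1 τ.1 ≠ 0 := fun h =>
          hst (Subtype.ext ((cdist_eq_zero_iff _ _).1 h))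
        simp [hM, Matrix.map_apply, Matrix.one_apply_ne hst, zero_pow hd]
    have hMdet : M.det ≠ 0 := by
      intro h
      have h1 : ((Polynomial.evalRingHom (0 : ℚ)) M.det) = 1 := by
        rw [RingHom.map_det, show (Polynomial.evalRingHom (0:ℚ)).mapMatrix M
          = M.map (Polynomial.evalRingHom (0 : ℚ)) from rfl, hMeval, Matrix.det_one]
      rw [h, map_zero] at h1
      exact zero_ne_one h1
    have : V.det ≠ 0 := by
      rw [hmap, show M.map (algebraMap (Polynomial ℚ) (RatFunc ℚ))
        = (algebraMap (Polynomial ℚ) (RatFunc ℚ)).mapMatrix M from rfl,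
        ← RingHom.map_det]
      intro h
      exact hMdet (RatFunc.algebraMap_injective ℚ (by rw [h, map_zero]))
    exact isUnit_iff_ne_zero.2 this
  have hVVinv : V * V⁻¹ = 1 := Matrix.mul_nonsing_inv V hdV
  set e : Chamber α ≃ Chamber α := chamberNeg α with he
  have he1 : ∀ τ : Chamber α, (e τ).1 = fun i => -τ.1 i := fun τ => rfl
  -- key entrywise identity
  have key : varchenkoInvEntries α
      = ((RatFunc.X : RatFunc ℚ) ^ n)⁻¹ • V.submatrix id e := by
    ext σ τ
    have hd : cdist σ.1 ((e τ).1) + cdist σ.1 τ.1 = n := by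
      rw [he1]; exact cdist_neg_add σ.1 τ.1 σ.2.1 τ.2.1
    have hpow : (RatFunc.X : RatFunc ℚ) ^ (cdist σ.1 ((e τ).1))
        = RatFunc.X ^ n * ((RatFunc.X : RatFunc ℚ) ^ (cdist σ.1 τ.1))⁻¹ := by
      rw [eq_mul_inv_iff_mul_eq₀ (pow_ne_zero _ hX), ← pow_add, hd]
    show ((RatFunc.X : RatFunc ℚ) ^ cdist σ.1 τ.1)⁻¹
        = ((RatFunc.X : RatFunc ℚ) ^ n)⁻¹ * V σ (e τ)
    rw [show V σ (e τ) = (RatFunc.X : RatFunc ℚ) ^ (cdist σ.1 ((e τ).1)) from rfl,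
      hpow, ← mul_assoc, inv_mul_cancel₀ hXn, one_mul]
  -- the explicit right inverse
  set B : Matrix (Chamber α) (Chamber α) (RatFunc ℚ) :=
    ((RatFunc.X : RatFunc ℚ) ^ n) • V⁻¹.submatrix e id with hB
  have hWB : varchenkoInvEntries α * B = 1 := by
    rw [key, hB, Matrix.smul_mul, Matrix.mul_smul, smul_smul, inv_mul_cancel₀ hXn,
      one_smul, Matrix.submatrix_mul_equiv, hVVinv, Matrix.submatrix_id_id]
  refine ⟨Matrix.isUnit_det_of_right_inverse hWB, ?_⟩
  rw [Matrix.inv_eq_right_inv hWB, hB]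
  have : ∀ σ τ : Chamber α,
      (((RatFunc.X : RatFunc ℚ) ^ n) • V⁻¹.submatrix (⇑e) id) σ τ
        = (RatFunc.X : RatFunc ℚ) ^ n * V⁻¹ (e σ) τ := fun σ τ => rfl
  simp only [this]
  simp only [← Finset.mul_sum]
  congr 1
  rw [show Mag α = ∑ σ : Chamber α, ∑ τ : Chamber α, V⁻¹ σ τ from rfl]
  exact Fintype.sum_equiv e _ _ (fun σ => rfl)

end
end

section
/- Let 𝒜 be a central hyperplane arrangement and write Mag(𝒜) = P/Q in lowest terms with Q monic. Then Q(1) ≠ 0 and P(1) = Q(1); that is, the rational function Mag(𝒜) has no pole at q = 1 and its value at q = 1 equals 1. -/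
open Matrix

noncomputable section

variable {E : Type*} [AddCommGroup E] [Module ℝ E]

namespace MagOne

open Finset Filter

variable {ι : Type*} [Fintype ι] [DecidableEq ι]

lemma cdist_symm (σ τ : ι → SignType) : cdist σ τ = cdist τ σ := by
  unfold cdist
  congr 1
  apply Finset.filter_congr
  intro i _
  simp [ne_comm]

variable {α : ι → (E →ₗ[ℝ] ℝ)}

/-- The separating set of two chambers. -/
def Dset (σ τ : Chamber α) : Finset ι := Finset.univ.filter fun i => σ.1 i ≠ τ.1 i

lemma Dset_card (σ τ : Chamber α) : (Dset σ τ).card = cdist σ.1 τ.1 := rfl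

/-- Restriction map: zero out coordinates in `T`. -/
def resT (T : Finset ι) (σ : Chamber α) : ι → SignType := fun i => if i ∈ T then 0 else σ.1 i

lemma resT_eq_iff (T : Finset ι) (σ τ : Chamber α) :
    resT T τ = resT T σ ↔ Dset σ τ ⊆ T := by
  constructor
  · intro h i hi
    simp only [Dset, mem_filter, mem_univ, true_and] at hi
    by_contra hiT
    have := congrFun h i
    simp only [resT, if_neg hiT] at this
    exact hi this.symm
  · intro h
    funext i
    simp only [resT]
    by_cases hiT : i ∈ T
    · simp [hiT]
    · have : ¬ σ.1 i ≠ τ.1 i := fun hne => hiT (h (by simp [Dset, hne]))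
      simp [hiT, not_not.mp this]

/-- binomial: sum over supersets. -/
lemma sum_powerset_weight (t : ℝ) (s : Finset ι) :
    ∑ U ∈ s.powerset, t ^ U.card * (1 - t) ^ (s.card - U.card) = 1 := by
  have h := Finset.prod_add (fun _ : ι => t) (fun _ : ι => 1 - t) s
  simp only [Finset.prod_const] at h
  have h2 : ∀ U ∈ s.powerset, t ^ U.card * (1 - t) ^ (s \ U).card
      = t ^ U.card * (1 - t) ^ (s.card - U.card) := by
    intro U hU
    rw [Finset.card_sdiff_of_subset (Finset.mem_powerset.mp hU)]
  rw [Finset.sum_congr rfl h2] at h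
  simpa using h.symm

lemma sum_supersets (t : ℝ) (D : Finset ι) :
    ∑ T : Finset ι, (if D ⊆ T then t ^ T.card * (1 - t) ^ (Fintype.card ι - T.card) else 0)
      = t ^ D.card := by
  classical
  rw [← Finset.sum_filter]
  rw [show Finset.univ.filter (fun T : Finset ι => D ⊆ T)
      = Dᶜ.powerset.image (fun U => U ∪ D) from ?_]
  · rw [Finset.sum_image ?inj]
    case inj =>
      intro U hU U' hU' h
      have dU : Disjoint U D := Finset.disjoint_left.mpr
        (fun a ha => by simpa using (Finset.mem_powerset.mp hU ha))
      have dU' : Disjoint U' D := Finset.disjoint_left.mpr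
        (fun a ha => by simpa using (Finset.mem_powerset.mp hU' ha))
      rw [← Finset.union_sdiff_cancel_right dU, show U ∪ D = U' ∪ D from h, Finset.union_sdiff_cancel_right dU']
    have : ∀ U ∈ Dᶜ.powerset,
        t ^ (U ∪ D).card * (1 - t) ^ (Fintype.card ι - (U ∪ D).card)
        = t ^ D.card * (t ^ U.card * (1 - t) ^ (Dᶜ.card - U.card)) := by
      intro U hU
      have dU : Disjoint U D := Finset.disjoint_left.mpr
        (fun a ha => by simpa using (Finset.mem_powerset.mp hU ha))
      have hcard : (U ∪ D).card = U.card + D.card := Finset.card_union_of_disjoint dU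
      have hcompl : Dᶜ.card = Fintype.card ι - D.card := by
        simp [Finset.card_compl]
      have hUle : U.card ≤ Dᶜ.card := Finset.card_le_card (Finset.mem_powerset.mp hU)
      have hDle : D.card ≤ Fintype.card ι := Finset.card_le_univ D
      have hexp : Fintype.card ι - (U.card + D.card) = Dᶜ.card - U.card := by
        rw [hcompl]; omega
      rw [hcard, pow_add, hexp]
      ring
    rw [Finset.sum_congr rfl this, ← Finset.mul_sum, sum_powerset_weight, mul_one]
  · ext T
    simp only [Finset.mem_filter, Finset.mem_univ, true_and, Finset.mem_image,
      Finset.mem_powerset]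
    constructor
    · intro hDT
      exact ⟨T \ D, fun a ha => by simp [Finset.mem_sdiff.mp ha],
        by rw [Finset.sdiff_union_of_subset hDT]⟩
    · rintro ⟨U, _, rfl⟩
      exact Finset.subset_union_right


/-- The quadratic form of the Varchenko matrix at a real parameter `t`. -/
def qf (α : ι → (E →ₗ[ℝ] ℝ)) (t : ℝ) (x : Chamber α → ℝ) : ℝ :=
  ∑ σ, ∑ τ, t ^ cdist σ.1 τ.1 * (x σ * x τ)

lemma sq_fiber (T : Finset ι) (x : Chamber α → ℝ) :
    ∑ g : ι → SignType, (∑ σ ∈ univ.filter (fun σ => resT T σ = g), x σ) ^ 2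
      = ∑ σ, ∑ τ ∈ univ.filter (fun τ => resT T τ = resT T σ), x σ * x τ := by
  have step1 : ∀ g : ι → SignType,
      (∑ σ ∈ univ.filter (fun σ => resT T σ = g), x σ) ^ 2
      = ∑ σ ∈ univ.filter (fun σ => resT T σ = g),
          (x σ * ∑ τ ∈ univ.filter (fun τ => resT T τ = resT T σ), x τ) := by
    intro g
    rw [sq, Finset.sum_mul]
    refine Finset.sum_congr rfl fun σ hσ => ?_
    have hg : resT T σ = g := (Finset.mem_filter.mp hσ).2
    rw [hg]
  rw [Finset.sum_congr rfl fun g _ => step1 g]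
  rw [Finset.sum_fiberwise univ (fun σ => resT T σ)
    (fun σ => x σ * ∑ τ ∈ univ.filter (fun τ => resT T τ = resT T σ), x τ)]
  exact Finset.sum_congr rfl fun σ _ => Finset.mul_sum _ _ _

lemma qf_eq (t : ℝ) (x : Chamber α → ℝ) :
    qf α t x = ∑ T : Finset ι, (t ^ T.card * (1 - t) ^ (Fintype.card ι - T.card)) *
      ∑ g : ι → SignType, (∑ σ ∈ univ.filter (fun σ => resT T σ = g), x σ) ^ 2 := by
  have coef : ∀ σ τ : Chamber α, (t : ℝ) ^ cdist σ.1 τ.1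
      = ∑ T : Finset ι, (if Dset σ τ ⊆ T then
          t ^ T.card * (1 - t) ^ (Fintype.card ι - T.card) else 0) := by
    intro σ τ
    rw [sum_supersets, Dset_card]
  calc qf α t x
      = ∑ σ, ∑ τ, ∑ T : Finset ι, (if Dset σ τ ⊆ T then
          (t ^ T.card * (1 - t) ^ (Fintype.card ι - T.card)) * (x σ * x τ) else 0) := by
        unfold qf
        refine Finset.sum_congr rfl fun σ _ => Finset.sum_congr rfl fun τ _ => ?_
        rw [coef σ τ, Finset.sum_mul]
        exact Finset.sum_congr rfl fun T _ => by rw [ite_mul, zero_mul]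
    _ = ∑ T : Finset ι, ∑ σ, ∑ τ, (if Dset σ τ ⊆ T then
          (t ^ T.card * (1 - t) ^ (Fintype.card ι - T.card)) * (x σ * x τ) else 0) := by
        exact Eq.trans (Finset.sum_congr rfl fun σ _ => Finset.sum_comm) Finset.sum_comm
    _ = ∑ T : Finset ι, (t ^ T.card * (1 - t) ^ (Fintype.card ι - T.card)) *
          ∑ g : ι → SignType, (∑ σ ∈ univ.filter (fun σ => resT T σ = g), x σ) ^ 2 := by
        refine Finset.sum_congr rfl fun T _ => ?_
        rw [sq_fiber, Finset.mul_sum]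
        refine Finset.sum_congr rfl fun σ _ => ?_
        rw [Finset.mul_sum, Finset.sum_filter]
        exact Finset.sum_congr rfl fun τ _ => if_congr (resT_eq_iff T σ τ).symm rfl rfl

lemma qf_term_nonneg (t : ℝ) (ht0 : 0 ≤ t) (ht1 : t ≤ 1) (x : Chamber α → ℝ) (T : Finset ι) :
    0 ≤ (t ^ T.card * (1 - t) ^ (Fintype.card ι - T.card)) *
      ∑ g : ι → SignType, (∑ σ ∈ univ.filter (fun σ => resT T σ = g), x σ) ^ 2 :=
  mul_nonneg (mul_nonneg (pow_nonneg ht0 _) (pow_nonneg (by linarith) _))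
    (Finset.sum_nonneg fun g _ => sq_nonneg _)

lemma qf_ge_univ {t : ℝ} (ht0 : 0 ≤ t) (ht1 : t ≤ 1) (x : Chamber α → ℝ) :
    t ^ (Fintype.card ι) * (∑ σ, x σ) ^ 2 ≤ qf α t x := by
  rw [qf_eq]
  refine le_trans ?_ (Finset.single_le_sum
    (fun T (_ : T ∈ univ) => qf_term_nonneg t ht0 ht1 x T) (Finset.mem_univ Finset.univ))
  have hc : t ^ (Finset.univ : Finset ι).card *
      (1 - t) ^ (Fintype.card ι - (Finset.univ : Finset ι).card) = t ^ (Fintype.card ι) := by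
    rw [Finset.card_univ, Nat.sub_self, pow_zero, mul_one]
  rw [hc]
  refine mul_le_mul_of_nonneg_left ?_ (pow_nonneg ht0 _)
  have key : (∑ σ ∈ univ.filter
      (fun σ : Chamber α => resT (Finset.univ : Finset ι) σ = fun _ => 0), x σ)
      = ∑ σ, x σ := by
    have : univ.filter (fun σ : Chamber α => resT (Finset.univ : Finset ι) σ = fun _ => 0)
        = univ := by
      refine Finset.filter_true_of_mem fun σ _ => ?_
      funext i
      simp [resT]
    rw [this]
  calc (∑ σ, x σ) ^ 2
      = (∑ σ ∈ univ.filter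
          (fun σ : Chamber α => resT (Finset.univ : Finset ι) σ = fun _ => 0), x σ) ^ 2 := by
        rw [key]
    _ ≤ _ := Finset.single_le_sum (f := fun g : ι → SignType =>
        (∑ σ ∈ univ.filter (fun σ => resT Finset.univ σ = g), x σ) ^ 2)
        (fun g _ => sq_nonneg _) (Finset.mem_univ (fun _ => 0))

lemma qf_ge_empty {t : ℝ} (ht0 : 0 ≤ t) (ht1 : t ≤ 1) (x : Chamber α → ℝ) :
    (1 - t) ^ (Fintype.card ι) * ∑ σ, (x σ) ^ 2 ≤ qf α t x := by
  rw [qf_eq]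
  refine le_trans (le_of_eq ?_) (Finset.single_le_sum
    (fun T (_ : T ∈ univ) => qf_term_nonneg t ht0 ht1 x T) (Finset.mem_univ (∅ : Finset ι)))
  rw [sq_fiber]
  have hfilt : ∀ σ : Chamber α,
      univ.filter (fun τ : Chamber α => resT (∅ : Finset ι) τ = resT ∅ σ) = {σ} := by
    intro σ
    ext τ
    simp only [Finset.mem_filter, Finset.mem_univ, true_and, Finset.mem_singleton]
    constructor
    · intro h
      apply Subtype.ext
      funext i
      have := congrFun h i
      simpa [resT] using this
    · rintro rfl; rfl
  have : ∑ σ : Chamber α, ∑ τ ∈ univ.filter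
        (fun τ : Chamber α => resT (∅ : Finset ι) τ = resT ∅ σ), x σ * x τ
      = ∑ σ : Chamber α, (x σ) ^ 2 := by
    refine Finset.sum_congr rfl fun σ _ => ?_
    rw [hfilt σ, Finset.sum_singleton, sq]
  rw [this, Finset.card_empty, pow_zero, one_mul, Nat.sub_zero]


/-- The real Varchenko matrix at parameter `t`. -/
def Amat (α : ι → (E →ₗ[ℝ] ℝ)) (t : ℝ) : Matrix (Chamber α) (Chamber α) ℝ :=
  Matrix.of fun σ τ => t ^ cdist σ.1 τ.1

lemma qf_eq_mulVec (t : ℝ) (x : Chamber α → ℝ) :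
    qf α t x = ∑ σ, x σ * (Amat α t).mulVec x σ := by
  unfold qf
  refine Finset.sum_congr rfl fun σ _ => ?_
  simp only [Matrix.mulVec, dotProduct, Amat, Matrix.of_apply, Finset.mul_sum]
  exact Finset.sum_congr rfl fun τ _ => by ring

lemma sum_sq_pos {v : Chamber α → ℝ} (hv : v ≠ 0) : 0 < ∑ σ, (v σ) ^ 2 := by
  obtain ⟨i, hi⟩ := Function.ne_iff.mp hv
  have h1 : 0 < v i ^ 2 :=
    lt_of_le_of_ne (sq_nonneg _) (Ne.symm (pow_ne_zero 2 hi))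
  exact lt_of_lt_of_le h1 (Finset.single_le_sum (fun σ _ => sq_nonneg (v σ))
    (Finset.mem_univ i))

lemma det_Amat_ne_zero {t : ℝ} (ht0 : 0 < t) (ht1 : t < 1) : (Amat α t).det ≠ 0 := by
  intro h
  obtain ⟨v, hv0, hv⟩ := Matrix.exists_mulVec_eq_zero_iff.mpr h
  have h1 : qf α t v = 0 := by
    rw [qf_eq_mulVec, hv]; simp
  have h2 := qf_ge_empty (α := α) ht0.le ht1.le v
  have h3 : 0 < ∑ σ, (v σ) ^ 2 := sum_sq_pos hv0
  have h4 : 0 < (1 - t) ^ (Fintype.card ι) := pow_pos (by linarith) _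
  nlinarith [mul_pos h4 h3]

lemma mag_bounds [Nonempty (Chamber α)] {t : ℝ} (ht0 : 0 < t) (ht1 : t < 1) :
    1 ≤ ∑ σ, ∑ τ, (Amat α t)⁻¹ σ τ ∧
      t ^ (Fintype.card ι) * (∑ σ, ∑ τ, (Amat α t)⁻¹ σ τ) ≤ 1 := by
  set n : ℝ := (Fintype.card (Chamber α) : ℝ) with hn
  have hn1 : 1 ≤ n := by
    rw [hn]
    exact_mod_cast Nat.one_le_iff_ne_zero.mpr (Fintype.card_ne_zero)
  have hdet : (Amat α t).det ≠ 0 := det_Amat_ne_zero ht0 ht1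
  have hU : IsUnit (Amat α t).det := isUnit_iff_ne_zero.mpr hdet
  set w : Chamber α → ℝ := (Amat α t)⁻¹.mulVec (fun _ => 1) with hw
  have hAw : (Amat α t).mulVec w = fun _ => 1 := by
    rw [hw, Matrix.mulVec_mulVec, Matrix.mul_nonsing_inv _ hU, Matrix.one_mulVec]
  have hm : ∑ σ, ∑ τ, (Amat α t)⁻¹ σ τ = ∑ σ, w σ := by
    refine Finset.sum_congr rfl fun σ _ => ?_
    simp [hw, Matrix.mulVec, dotProduct]
  set m := ∑ σ, w σ with hmdef
  have hqfw : qf α t w = m := by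
    rw [qf_eq_mulVec, hAw]
    simp [hmdef]
  have hmulVec : ∀ σ : Chamber α, ∑ τ, t ^ cdist σ.1 τ.1 * w τ = 1 := by
    intro σ
    have := congrFun hAw σ
    simpa [Amat, Matrix.mulVec, dotProduct] using this
  have hS2 : ∑ σ : Chamber α, ∑ τ : Chamber α, t ^ cdist σ.1 τ.1 * w τ = n := by
    simp [hmulVec, hn]
  have hS1 : ∑ σ : Chamber α, ∑ τ : Chamber α, t ^ cdist σ.1 τ.1 * w σ = n := by
    calc ∑ σ : Chamber α, ∑ τ : Chamber α, t ^ cdist σ.1 τ.1 * w σ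
        = ∑ σ : Chamber α, ∑ τ : Chamber α, t ^ cdist τ.1 σ.1 * w σ := by
          refine Finset.sum_congr rfl fun σ _ => Finset.sum_congr rfl fun τ _ => ?_
          rw [cdist_symm]
      _ = ∑ τ : Chamber α, ∑ σ : Chamber α, t ^ cdist τ.1 σ.1 * w σ := Finset.sum_comm
      _ = n := hS2
  set S3 := ∑ σ : Chamber α, ∑ τ : Chamber α, t ^ cdist σ.1 τ.1 with hS3def
  have hS3pos : 0 < S3 := by
    refine Finset.sum_pos (fun σ _ => Finset.sum_pos (fun τ _ => pow_pos ht0 _) ?_) ?_ <;>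
      exact Finset.univ_nonempty
  have hS3le : S3 ≤ n * n := by
    have : S3 ≤ ∑ _σ : Chamber α, ∑ _τ : Chamber α, (1 : ℝ) := by
      refine Finset.sum_le_sum fun σ _ => Finset.sum_le_sum fun τ _ => ?_
      exact pow_le_one₀ ht0.le ht1.le
    simpa [Finset.sum_const, hn, mul_comm] using this
  have hCS : ∀ c : ℝ, 0 ≤ m + c * n + c * n + c * c * S3 := by
    intro c
    have h0 : 0 ≤ qf α t (fun σ => w σ + c) :=
      le_trans (mul_nonneg (pow_nonneg (by linarith) _)
        (Finset.sum_nonneg fun σ _ => sq_nonneg _)) (qf_ge_empty ht0.le ht1.le _)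
    have heq : qf α t (fun σ => w σ + c) = m + c * n + c * n + c * c * S3 := by
      have expand : ∀ σ τ : Chamber α,
          t ^ cdist σ.1 τ.1 * ((w σ + c) * (w τ + c))
          = t ^ cdist σ.1 τ.1 * (w σ * w τ) + c * (t ^ cdist σ.1 τ.1 * w σ)
            + c * (t ^ cdist σ.1 τ.1 * w τ) + c * (c * t ^ cdist σ.1 τ.1) := by
        intro σ τ; ring
      calc qf α t (fun σ => w σ + c)
          = ∑ σ : Chamber α, ∑ τ : Chamber α,
              (t ^ cdist σ.1 τ.1 * (w σ * w τ) + c * (t ^ cdist σ.1 τ.1 * w σ)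
              + c * (t ^ cdist σ.1 τ.1 * w τ) + c * (c * t ^ cdist σ.1 τ.1)) := by
            unfold qf
            exact Finset.sum_congr rfl fun σ _ => Finset.sum_congr rfl fun τ _ => expand σ τ
        _ = m + c * n + c * n + c * c * S3 := by
            simp only [Finset.sum_add_distrib, ← Finset.mul_sum]
            rw [hS1, hS2]
            have hqw : ∑ σ : Chamber α, ∑ τ : Chamber α, t ^ cdist σ.1 τ.1 * (w σ * w τ)
                = m := hqfw
            rw [hqw, ← hS3def]
            ring
    linarith [heq ▸ h0]
  have hmain : 1 ≤ m := by
    have hS3ne : S3 ≠ 0 := ne_of_gt hS3pos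
    have h := hCS (-(n / S3))
    have hx : n / S3 * S3 = n := div_mul_cancel₀ n hS3ne
    have hxx : n / S3 * (n / S3) * S3 = n / S3 * n := by
      rw [mul_assoc, hx]
    have e1 : n / S3 * n ≤ m := by nlinarith [h, hxx]
    have e2 : (1 : ℝ) ≤ n / S3 * n := by
      have : n / S3 * n = n * n / S3 := by ring
      rw [this, le_div_iff₀ hS3pos, one_mul]
      exact hS3le
    linarith
  constructor
  · rw [hm]; exact hmain
  · rw [hm]
    have hq := qf_ge_univ (α := α) ht0.le ht1.le w
    rw [hqfw] at hq
    have htN : 0 < t ^ (Fintype.card ι) := pow_pos ht0 _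
    nlinarith [hq, htN, hmain]


lemma det_mul_sum_inv {K : Type*} [Field K] {nn : Type*} [Fintype nn] [DecidableEq nn]
    (M : Matrix nn nn K) (h : M.det ≠ 0) :
    M.det * (∑ i, ∑ j, M⁻¹ i j) = ∑ i, ∑ j, M.adjugate i j := by
  have hinv : ∀ i j, M⁻¹ i j = M.det⁻¹ * M.adjugate i j := by
    intro i j
    rw [Matrix.inv_def, Matrix.smul_apply, Ring.inverse_eq_inv', smul_eq_mul]
  have hsum : (∑ i, ∑ j, M⁻¹ i j) = M.det⁻¹ * ∑ i, ∑ j, M.adjugate i j := by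
    rw [Finset.mul_sum]
    refine Finset.sum_congr rfl fun i _ => ?_
    rw [Finset.mul_sum]
    exact Finset.sum_congr rfl fun j _ => hinv i j
  rw [hsum, ← mul_assoc, mul_inv_cancel₀ h, one_mul]

/-- The Varchenko matrix over `ℚ[X]`. -/
def Mpoly (α : ι → (E →ₗ[ℝ] ℝ)) : Matrix (Chamber α) (Chamber α) (Polynomial ℚ) :=
  Matrix.of fun σ τ => Polynomial.X ^ cdist σ.1 τ.1

def Spoly (α : ι → (E →ₗ[ℝ] ℝ)) : Polynomial ℚ :=
  ∑ σ : Chamber α, ∑ τ : Chamber α, (Mpoly α).adjugate σ τ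

def Dpoly (α : ι → (E →ₗ[ℝ] ℝ)) : Polynomial ℚ := (Mpoly α).det

/-- Evaluation of rational polynomials at a real number, as a ring hom. -/
def evalφ (t : ℝ) : Polynomial ℚ →+* ℝ :=
  (Polynomial.evalRingHom t).comp (Polynomial.mapRingHom (algebraMap ℚ ℝ))

lemma evalφ_apply (t : ℝ) (p : Polynomial ℚ) :
    evalφ t p = (p.map (algebraMap ℚ ℝ)).eval t := rfl

lemma Amat_eq_map (t : ℝ) : Amat α t = (Mpoly α).map (evalφ t) := by
  ext σ τ
  simp [Amat, Mpoly, Matrix.map_apply, evalφ_apply, Polynomial.map_pow]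

lemma det_Amat_eq (t : ℝ) : (Amat α t).det = evalφ t (Dpoly α) := by
  rw [Amat_eq_map, Dpoly,
    show (Mpoly α).map ⇑(evalφ t) = (evalφ t).mapMatrix (Mpoly α) from rfl,
    ← RingHom.map_det]

lemma sum_adj_Amat_eq (t : ℝ) :
    ∑ σ, ∑ τ, (Amat α t).adjugate σ τ = evalφ t (Spoly α) := by
  rw [Amat_eq_map,
    show (Mpoly α).map ⇑(evalφ t) = (evalφ t).mapMatrix (Mpoly α) from rfl,
    ← RingHom.map_adjugate, Spoly]
  rw [map_sum]
  refine Finset.sum_congr rfl fun σ _ => ?_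
  rw [map_sum]
  rfl

lemma Dpoly_ne_zero : Dpoly α ≠ 0 := by
  intro h
  have h2 := det_Amat_ne_zero (α := α) (t := 1/2) (by norm_num) (by norm_num)
  rw [det_Amat_eq, h, map_zero] at h2
  exact h2 rfl

lemma varchenko_eq_map :
    varchenko α = (Mpoly α).map (algebraMap (Polynomial ℚ) (RatFunc ℚ)) := by
  ext σ τ
  simp [varchenko, Mpoly, Matrix.map_apply, map_pow, RatFunc.algebraMap_X]

lemma det_varchenko :
    (varchenko α).det = algebraMap (Polynomial ℚ) (RatFunc ℚ) (Dpoly α) := by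
  rw [varchenko_eq_map, Dpoly,
    show (Mpoly α).map ⇑(algebraMap (Polynomial ℚ) (RatFunc ℚ))
      = (algebraMap (Polynomial ℚ) (RatFunc ℚ)).mapMatrix (Mpoly α) from rfl,
    ← RingHom.map_det]

lemma sum_adj_varchenko :
    ∑ σ, ∑ τ, (varchenko α).adjugate σ τ
      = algebraMap (Polynomial ℚ) (RatFunc ℚ) (Spoly α) := by
  rw [varchenko_eq_map,
    show (Mpoly α).map ⇑(algebraMap (Polynomial ℚ) (RatFunc ℚ))
      = (algebraMap (Polynomial ℚ) (RatFunc ℚ)).mapMatrix (Mpoly α) from rfl,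
    ← RingHom.map_adjugate, Spoly, map_sum]
  refine Finset.sum_congr rfl fun σ _ => ?_
  rw [map_sum]
  rfl

lemma Mag_eq :
    Mag α = algebraMap (Polynomial ℚ) (RatFunc ℚ) (Spoly α)
      / algebraMap (Polynomial ℚ) (RatFunc ℚ) (Dpoly α) := by
  have hD : algebraMap (Polynomial ℚ) (RatFunc ℚ) (Dpoly α) ≠ 0 :=
    RatFunc.algebraMap_ne_zero (Dpoly_ne_zero (α := α))
  have hdet : (varchenko α).det ≠ 0 := by
    rw [det_varchenko]; exact hD
  have h := det_mul_sum_inv (varchenko α) hdet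
  rw [det_varchenko, sum_adj_varchenko] at h
  rw [Mag, eq_div_iff hD, mul_comm]
  exact h

lemma key_identity :
    (Mag α).num * Dpoly α = Spoly α * (Mag α).denom := by
  have h1 : algebraMap (Polynomial ℚ) (RatFunc ℚ) (Mag α).num
        / algebraMap (Polynomial ℚ) (RatFunc ℚ) (Mag α).denom
      = algebraMap (Polynomial ℚ) (RatFunc ℚ) (Spoly α)
        / algebraMap (Polynomial ℚ) (RatFunc ℚ) (Dpoly α) := by
    rw [RatFunc.num_div_denom, Mag_eq]
  have hQ : algebraMap (Polynomial ℚ) (RatFunc ℚ) (Mag α).denom ≠ 0 :=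
    RatFunc.algebraMap_ne_zero (RatFunc.denom_ne_zero _)
  have hD : algebraMap (Polynomial ℚ) (RatFunc ℚ) (Dpoly α) ≠ 0 :=
    RatFunc.algebraMap_ne_zero (Dpoly_ne_zero (α := α))
  rw [div_eq_div_iff hQ hD] at h1
  apply RatFunc.algebraMap_injective ℚ
  rw [_root_.map_mul, _root_.map_mul]
  exact h1

lemma P_eq_m_Q [Nonempty (Chamber α)] {t : ℝ} (ht0 : 0 < t) (ht1 : t < 1) :
    evalφ t (Mag α).num = (∑ σ, ∑ τ, (Amat α t)⁻¹ σ τ) * evalφ t (Mag α).denom := by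
  have hdet : (Amat α t).det ≠ 0 := det_Amat_ne_zero ht0 ht1
  have h1 := det_mul_sum_inv (Amat α t) hdet
  have h2 : evalφ t (Mag α).num * evalφ t (Dpoly α)
      = evalφ t (Spoly α) * evalφ t (Mag α).denom := by
    rw [← _root_.map_mul, ← _root_.map_mul, key_identity]
  rw [← det_Amat_eq, ← sum_adj_Amat_eq, ← h1] at h2
  apply mul_left_cancel₀ hdet
  calc (Amat α t).det * evalφ t (Mag α).num
      = evalφ t (Mag α).num * (Amat α t).det := mul_comm _ _
    _ = (Amat α t).det * (∑ σ, ∑ τ, (Amat α t)⁻¹ σ τ) * evalφ t (Mag α).denom := h2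
    _ = (Amat α t).det * ((∑ σ, ∑ τ, (Amat α t)⁻¹ σ τ) * evalφ t (Mag α).denom) :=
        mul_assoc _ _ _


lemma exists_forall_ne (hα : ∀ i, α i ≠ 0) (s : Finset ι) :
    ∃ x : E, ∀ i ∈ s, α i x ≠ 0 := by
  classical
  induction s using Finset.induction_on with
  | empty => exact ⟨0, by simp⟩
  | @insert j s hj ih =>
    obtain ⟨x, hx⟩ := ih
    obtain ⟨y, hy⟩ : ∃ y, α j y ≠ 0 := by
      by_contra hcon
      push_neg at hcon
      exact hα j (LinearMap.ext hcon)
    set bad : Finset ℝ := ((insert j s).filter (fun i => α i y ≠ 0)).image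
      (fun i => -(α i x) / (α i y)) with hbad
    obtain ⟨c, hc⟩ := Infinite.exists_notMem_finset bad
    refine ⟨x + c • y, fun i hi => ?_⟩
    rw [map_add, _root_.map_smul, smul_eq_mul]
    intro hzero
    by_cases hiy : α i y = 0
    · rw [hiy, mul_zero, add_zero] at hzero
      rcases Finset.mem_insert.mp hi with rfl | his
      · exact hy hiy
      · exact hx i his hzero
    · apply hc
      rw [hbad]
      refine Finset.mem_image.mpr ⟨i, Finset.mem_filter.mpr ⟨hi, hiy⟩, ?_⟩
      field_simp
      linarith [hzero]

lemma chamber_nonempty (hα : ∀ i, α i ≠ 0) : Nonempty (Chamber α) := by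
  obtain ⟨x, hx⟩ := exists_forall_ne hα Finset.univ
  have hx' : ∀ i, α i x ≠ 0 := fun i => hx i (Finset.mem_univ i)
  refine ⟨⟨fun i => SignType.sign (α i x), ⟨fun i => ?_, x, fun i => ?_⟩⟩⟩
  · simpa [sign_eq_zero_iff] using hx' i
  · show (SignType.sign ((α i) x) : ℝ) * (α i) x > 0
    rcases lt_or_gt_of_ne (hx' i) with h | h
    · rw [sign_neg h]
      simpa using h
    · rw [sign_pos h]
      simpa using h

lemma main_aux [Nonempty (Chamber α)] :
    ((Mag α).denom.eval 1 ≠ (0 : ℚ)) ∧ (Mag α).num.eval 1 = (Mag α).denom.eval 1 := by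
  set N := Fintype.card ι with hN
  set P : Polynomial ℚ := (Mag α).num with hP
  set Q : Polynomial ℚ := (Mag α).denom with hQ
  set Pr : Polynomial ℝ := P.map (algebraMap ℚ ℝ) with hPr
  set Qr : Polynomial ℝ := Q.map (algebraMap ℚ ℝ) with hQr
  -- pointwise bounds for 1/2 ≤ t < 1
  have hbound : ∀ t : ℝ, 1/2 ≤ t → t < 1 →
      |Pr.eval t| ≤ 2 ^ N * |Qr.eval t| ∧
      |Pr.eval t - Qr.eval t| ≤ |Qr.eval t| * (2 ^ N * (1 - t ^ N)) := by
    intro t hthalf ht1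
    have ht0 : (0 : ℝ) < t := lt_of_lt_of_le (by norm_num) hthalf
    set m : ℝ := ∑ σ, ∑ τ, (Amat α t)⁻¹ σ τ with hmdef
    have hPm : Pr.eval t = m * Qr.eval t := by
      have := P_eq_m_Q (α := α) ht0 ht1
      rw [evalφ_apply, evalφ_apply] at this
      exact this
    obtain ⟨hm1, hm2⟩ := mag_bounds (α := α) ht0 ht1
    rw [← hmdef] at hm1 hm2
    rw [← hN] at hm2
    have hhpos : (0 : ℝ) < (1/2 : ℝ) ^ N := by positivity
    have htNpos : (0 : ℝ) < t ^ N := pow_pos ht0 N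
    have htNle1 : t ^ N ≤ 1 := pow_le_one₀ ht0.le ht1.le
    have hhalfN : (1/2 : ℝ) ^ N ≤ t ^ N := pow_le_pow_left₀ (by norm_num) hthalf N
    have hprod : ((1:ℝ)/2) ^ N * 2 ^ N = 1 := by
      rw [← mul_pow]; norm_num
    have hm2N : m ≤ 2 ^ N := by
      nlinarith [hm2, hhalfN, hm1, hhpos, hprod]
    have hmminus : m - 1 ≤ 2 ^ N * (1 - t ^ N) := by
      nlinarith [hm2, hm2N, htNle1, hm1]
    constructor
    · rw [hPm, abs_mul]
      have : |m| = m := abs_of_nonneg (by linarith)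
      rw [this]
      exact mul_le_mul_of_nonneg_right hm2N (abs_nonneg _)
    · have : Pr.eval t - Qr.eval t = (m - 1) * Qr.eval t := by
        rw [hPm]; ring
      rw [this, abs_mul]
      have habs : |m - 1| = m - 1 := abs_of_nonneg (by linarith)
      rw [habs, mul_comm]
      exact mul_le_mul_of_nonneg_left hmminus (abs_nonneg _)
  -- the sequence tending to 1 from below
  set u : ℕ → ℝ := fun k => 1 - 1/((k : ℝ) + 2) with hu
  have hu2 : Tendsto (fun k : ℕ => 1/((k : ℝ) + 2)) atTop (nhds 0) := by
    refine squeeze_zero (fun k => by positivity) (fun k => ?_)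
      tendsto_one_div_add_atTop_nhds_zero_nat
    exact one_div_le_one_div_of_le (by positivity) (by push_cast; linarith)
  have hulim : Tendsto u atTop (nhds 1) := by
    have := (tendsto_const_nhds (x := (1:ℝ)) (f := atTop)).sub hu2
    simpa [hu] using this
  have huhalf : ∀ k, 1/2 ≤ u k := by
    intro k
    have hk : (0:ℝ) ≤ (k : ℝ) := Nat.cast_nonneg k
    have h1 : 1/((k : ℝ) + 2) ≤ 1/2 :=
      one_div_le_one_div_of_le (by norm_num) (by linarith)
    simp only [hu]
    linarith
  have hult1 : ∀ k, u k < 1 := by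
    intro k
    have : (0:ℝ) < 1/((k : ℝ) + 2) := by positivity
    simp only [hu]
    linarith
  have hcont : ∀ R : Polynomial ℝ, Tendsto (fun k => R.eval (u k)) atTop (nhds (R.eval 1)) :=
    fun R => (R.continuous.tendsto 1).comp hulim
  -- step A : Qr.eval 1 ≠ 0
  have hQr1 : Qr.eval 1 ≠ 0 := by
    intro hzero
    have hQ1 : Q.eval 1 = 0 := by
      have : Qr.eval 1 = algebraMap ℚ ℝ (Q.eval 1) := Polynomial.eval_one_map _ _
      rw [this, eq_ratCast] at hzero
      exact_mod_cast hzero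
    obtain ⟨a, b, hab⟩ := RatFunc.isCoprime_num_denom (Mag α)
    have heval : a.eval 1 * P.eval 1 + b.eval 1 * Q.eval 1 = 1 := by
      have := congrArg (Polynomial.eval (1 : ℚ)) hab
      simpa using this
    have hP1 : P.eval 1 ≠ 0 := by
      intro h0
      rw [h0, hQ1] at heval
      simp at heval
    have hPr1 : Pr.eval 1 ≠ 0 := by
      have : Pr.eval 1 = algebraMap ℚ ℝ (P.eval 1) := Polynomial.eval_one_map _ _
      rw [this, eq_ratCast]
      exact_mod_cast hP1
    have hlim1 : Tendsto (fun k => |Pr.eval (u k)|) atTop (nhds (|Pr.eval 1|)) :=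
      (continuous_abs.tendsto _).comp (hcont Pr)
    have hlim2 : Tendsto (fun k => 2 ^ N * |Qr.eval (u k)|) atTop
        (nhds (2 ^ N * |Qr.eval 1|)) :=
      tendsto_const_nhds.mul ((continuous_abs.tendsto _).comp (hcont Qr))
    have hle : |Pr.eval 1| ≤ 2 ^ N * |Qr.eval 1| :=
      le_of_tendsto_of_tendsto' hlim1 hlim2
        (fun k => (hbound (u k) (huhalf k) (hult1 k)).1)
    rw [hzero] at hle
    simp only [abs_zero, mul_zero] at hle
    exact hPr1 (abs_eq_zero.mp (le_antisymm hle (abs_nonneg _)))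
  -- step B : values agree at 1
  have hlimL : Tendsto (fun k => |Pr.eval (u k) - Qr.eval (u k)|) atTop
      (nhds (|Pr.eval 1 - Qr.eval 1|)) :=
    (continuous_abs.tendsto _).comp ((hcont Pr).sub (hcont Qr))
  have hlimR : Tendsto (fun k => |Qr.eval (u k)| * (2 ^ N * (1 - (u k) ^ N))) atTop
      (nhds (|Qr.eval 1| * (2 ^ N * (1 - (1:ℝ) ^ N)))) := by
    refine Filter.Tendsto.mul ((continuous_abs.tendsto _).comp (hcont Qr)) ?_
    exact tendsto_const_nhds.mul
      (tendsto_const_nhds.sub ((continuous_pow N).tendsto (1:ℝ) |>.comp hulim))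
  have hle : |Pr.eval 1 - Qr.eval 1| ≤ |Qr.eval 1| * (2 ^ N * (1 - (1:ℝ) ^ N)) :=
    le_of_tendsto_of_tendsto' hlimL hlimR
      (fun k => (hbound (u k) (huhalf k) (hult1 k)).2)
  rw [one_pow] at hle
  simp only [sub_self, mul_zero] at hle
  have heq : Pr.eval 1 = Qr.eval 1 := by
    have := le_antisymm hle (abs_nonneg _)
    have := abs_eq_zero.mp this
    linarith [this]
  constructor
  · intro h0
    apply hQr1
    have : Qr.eval 1 = algebraMap ℚ ℝ (Q.eval 1) := Polynomial.eval_one_map _ _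
    rw [this, h0]
    simp
  · have hP1 : Pr.eval 1 = algebraMap ℚ ℝ (P.eval 1) := Polynomial.eval_one_map _ _
    have hQ1 : Qr.eval 1 = algebraMap ℚ ℝ (Q.eval 1) := Polynomial.eval_one_map _ _
    rw [hP1, hQ1, eq_ratCast, eq_ratCast] at heq
    exact_mod_cast heq

end MagOne

/-- **The magnitude of an arrangement has no pole at `q = 1`, and takes value `1` there.**
Writing `Mag(𝒜) = P/Q` in lowest terms with `Q` monic (`P = num`, `Q = denom`), we have
`Q(1) ≠ 0` and `P(1) = Q(1)`. -/
theorem mag_one {ι : Type*} [Fintype ι] [FiniteDimensional ℝ E]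
    (α : ι → (E →ₗ[ℝ] ℝ)) (hα : ∀ i, α i ≠ 0)
    (hker : ∀ i j, LinearMap.ker (α i) = LinearMap.ker (α j) → i = j) :
    (RatFunc.denom (Mag α)).eval 1 ≠ 0 ∧
      (RatFunc.num (Mag α)).eval 1 = (RatFunc.denom (Mag α)).eval 1 := by
  letI : DecidableEq ι := Classical.decEq ι
  haveI : Nonempty (Chamber α) := MagOne.chamber_nonempty hα
  exact MagOne.main_aux (α := α)

end
end

section
/- Let 𝒜 be a central hyperplane arrangement with N hyperplanes, and write Mag(𝒜) = P/Q in lowest terms with Q monic. Then the degree of Q minus the degree of P equals N, i.e. Q.natDegree = P.natDegree + N. -/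
open Matrix
open scoped nonZeroDivisors

noncomputable section

variable {E : Type*} [AddCommGroup E] [Module ℝ E]

section MagAuxSection



open Polynomial in
lemma MagAux.reflect_reflect {R : Type*} [Semiring R] (N : ℕ) (p : R[X]) :
    (p.reflect N).reflect N = p := by
  ext n
  rw [coeff_reflect, coeff_reflect, revAt_invol]

noncomputable def MagAux.psi : Polynomial ℚ →+* RatFunc ℚ :=
  Polynomial.eval₂RingHom (algebraMap ℚ (RatFunc ℚ)) (RatFunc.X)⁻¹

lemma MagAux.aeval_ratfuncX (q : Polynomial ℚ) :
    Polynomial.eval₂ (algebraMap ℚ (RatFunc ℚ)) RatFunc.X q = algebraMap _ _ q := by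
  rw [← Polynomial.aeval_def, ← RatFunc.algebraMap_X (K := ℚ)]
  have h := Polynomial.aeval_algHom_apply (IsScalarTower.toAlgHom ℚ (Polynomial ℚ) (RatFunc ℚ))
    Polynomial.X q
  simp only [IsScalarTower.coe_toAlgHom'] at h
  rw [h, Polynomial.aeval_X_left_apply]

lemma MagAux.psi_mul_pow (p : Polynomial ℚ) :
    MagAux.psi p * RatFunc.X ^ p.natDegree = algebraMap _ _ p.reverse := by
  letI : Invertible (RatFunc.X : RatFunc ℚ) := invertibleOfNonzero RatFunc.X_ne_zero
  have hrr : (p.reverse).reflect p.natDegree = p := by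
    rw [Polynomial.reverse, MagAux.reflect_reflect]
  have h := Polynomial.eval₂_reflect_mul_pow (algebraMap ℚ (RatFunc ℚ)) RatFunc.X
    p.natDegree p.reverse p.reverse_natDegree_le
  rw [hrr, MagAux.aeval_ratfuncX, invOf_eq_inv] at h
  simpa [MagAux.psi] using h

lemma MagAux.psi_ne_zero {p : Polynomial ℚ} (hp : p ≠ 0) : MagAux.psi p ≠ 0 := by
  intro h
  have h2 := MagAux.psi_mul_pow p
  rw [h, zero_mul] at h2
  exact RatFunc.algebraMap_ne_zero (by simpa [Polynomial.reverse_eq_zero] using hp) h2.symm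

lemma MagAux.psi_cond : (Polynomial ℚ)⁰ ≤ (RatFunc ℚ)⁰.comap MagAux.psi := by
  intro p hp
  rw [mem_nonZeroDivisors_iff_ne_zero] at hp
  exact Submonoid.mem_comap.mpr (mem_nonZeroDivisors_iff_ne_zero.mpr (MagAux.psi_ne_zero hp))

noncomputable def MagAux.phi : RatFunc ℚ →+* RatFunc ℚ :=
  RatFunc.liftRingHom MagAux.psi MagAux.psi_cond

lemma MagAux.phi_apply (f : RatFunc ℚ) :
    MagAux.phi f = MagAux.psi f.num / MagAux.psi f.denom :=
  RatFunc.liftRingHom_apply _ _ _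

lemma MagAux.phi_algebraMap (p : Polynomial ℚ) :
    MagAux.phi (algebraMap _ _ p) = MagAux.psi p := by
  have := RatFunc.liftRingHom_apply_div MagAux.psi MagAux.psi_cond p 1
  simpa [MagAux.phi] using this

lemma MagAux.phi_X : MagAux.phi RatFunc.X = (RatFunc.X : RatFunc ℚ)⁻¹ := by
  rw [← RatFunc.algebraMap_X, MagAux.phi_algebraMap]
  simp [MagAux.psi]



namespace MagAux

lemma exists_forall_ne {ι : Type*} [Fintype ι] (α : ι → (E →ₗ[ℝ] ℝ)) (hα : ∀ i, α i ≠ 0) :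
    ∃ x : E, ∀ i, α i x ≠ 0 := by
  suffices h : ∀ s : Finset ι, ∃ x : E, ∀ i ∈ s, α i x ≠ 0 by
    obtain ⟨x, hx⟩ := h Finset.univ
    exact ⟨x, fun i => hx i (Finset.mem_univ i)⟩
  classical
  intro s
  induction s using Finset.induction_on with
  | empty => exact ⟨0, by simp⟩
  | @insert j s hj ih =>
    obtain ⟨x, hx⟩ := ih
    obtain ⟨y, hy⟩ : ∃ y, α j y ≠ 0 := by
      by_contra h
      push_neg at h
      exact hα j (LinearMap.ext h)
    obtain ⟨t, ht⟩ := Infinite.exists_notMem_finset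
      ((insert j s).image fun i => -(α i x / α i y))
    refine ⟨x + t • y, fun i hi hzero => ?_⟩
    rw [map_add, _root_.map_smul, smul_eq_mul] at hzero
    by_cases hiy : α i y = 0
    · rcases Finset.mem_insert.mp hi with rfl | his
      · exact hy hiy
      · rw [hiy, mul_zero, add_zero] at hzero
        exact hx i his hzero
    · apply ht
      refine Finset.mem_image.mpr ⟨i, hi, ?_⟩
      field_simp
      linarith [hzero]

lemma chamber_nonempty {ι : Type*} [Fintype ι] (α : ι → (E →ₗ[ℝ] ℝ)) (hα : ∀ i, α i ≠ 0) :
    Nonempty (Chamber α) := by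
  obtain ⟨x, hx⟩ := exists_forall_ne α hα
  refine ⟨⟨fun i => SignType.sign (α i x), fun i => by simp [sign_eq_zero_iff, hx i], x, fun i => ?_⟩⟩
  dsimp only
  rcases lt_or_gt_of_ne (hx i) with h | h
  · rw [sign_neg h, SignType.coe_neg_one]
    nlinarith
  · rw [sign_pos h, SignType.coe_one, one_mul]
    exact h

/-- negation of a chamber -/
def negChamber {ι : Type*} (α : ι → (E →ₗ[ℝ] ℝ)) (σ : Chamber α) : Chamber α := by
  refine ⟨fun i => -σ.1 i, fun i h => σ.2.1 i ?_, ?_⟩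
  · have hkey : ∀ s : SignType, -s = 0 → s = 0 := by decide
    exact hkey _ h
  · obtain ⟨x, hx⟩ := σ.2.2
    exact ⟨-x, fun i => by rw [SignType.coe_neg, map_neg, neg_mul_neg]; exact hx i⟩

lemma negChamber_involutive {ι : Type*} (α : ι → (E →ₗ[ℝ] ℝ)) :
    Function.Involutive (negChamber α) := fun σ => Subtype.ext (funext fun i => neg_neg _)

def chamberNeg {ι : Type*} (α : ι → (E →ₗ[ℝ] ℝ)) : Chamber α ≃ Chamber α :=
  (negChamber_involutive α).toPerm

lemma chamberNeg_apply {ι : Type*} (α : ι → (E →ₗ[ℝ] ℝ)) (σ : Chamber α) (i : ι) :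
    ((chamberNeg α σ) : Chamber α).1 i = -σ.1 i := rfl

lemma cdist_eq_zero_iff {ι : Type*} [Fintype ι] {σ τ : ι → SignType} :
    cdist σ τ = 0 ↔ σ = τ := by
  simp [cdist, Finset.card_eq_zero, Finset.filter_eq_empty_iff, funext_iff, not_not]

lemma cdist_le {ι : Type*} [Fintype ι] (σ τ : ι → SignType) :
    cdist σ τ ≤ Fintype.card ι := by
  rw [← Finset.card_univ]
  exact Finset.card_filter_le _ _

lemma cdist_neg {ι : Type*} [Fintype ι] {α : ι → (E →ₗ[ℝ] ℝ)} (σ τ : Chamber α) :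
    cdist σ.1 (chamberNeg α τ).1 = Fintype.card ι - cdist σ.1 τ.1 := by
  have key : ∀ a b : SignType, a ≠ 0 → b ≠ 0 → ((a ≠ -b) ↔ a = b) := by decide
  have h1 : (Finset.univ.filter fun i => σ.1 i ≠ (chamberNeg α τ).1 i)
      = Finset.univ.filter fun i => ¬ (σ.1 i ≠ τ.1 i) := by
    ext i
    simp only [Finset.mem_filter, Finset.mem_univ, true_and, chamberNeg_apply, not_not]
    exact Finset.mem_filter.trans ((and_iff_right (Finset.mem_univ i)).trans (key _ _ (σ.2.1 i) (τ.2.1 i)))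
  have h2 := Finset.card_filter_add_card_filter_not (s := (Finset.univ : Finset ι))
    (p := fun i => σ.1 i ≠ τ.1 i)
  rw [cdist, h1]
  rw [Finset.card_univ] at h2
  unfold cdist
  omega

end MagAux

end MagAuxSection

set_option maxHeartbeats 1000000 in
set_option synthInstance.maxHeartbeats 400000 in
/-- **Degree drop of the magnitude.** Let `𝒜` be a central hyperplane arrangement with
`N` hyperplanes and write `Mag(𝒜) = P/Q` in lowest terms with `Q` monic.  Then
`deg Q = deg P + N`. -/
theorem mag_degree {ι : Type*} [Fintype ι] [FiniteDimensional ℝ E]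
    (α : ι → (E →ₗ[ℝ] ℝ)) (hα : ∀ i, α i ≠ 0)
    (hker : ∀ i j, LinearMap.ker (α i) = LinearMap.ker (α j) → i = j) :
    (RatFunc.denom (Mag α)).natDegree =
      (RatFunc.num (Mag α)).natDegree + Fintype.card ι := by
  classical
  have hXne : (RatFunc.X : RatFunc ℚ) ≠ 0 := RatFunc.X_ne_zero
  -- the polynomial Varchenko matrix
  set W : Matrix (Chamber α) (Chamber α) (Polynomial ℚ) :=
    Matrix.of (fun σ τ => Polynomial.X ^ cdist σ.1 τ.1) with hWdef
  have hVW : varchenko α = W.map (algebraMap (Polynomial ℚ) (RatFunc ℚ)) := by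
    ext σ τ
    simp [varchenko, hWdef, Matrix.map_apply, map_pow, RatFunc.algebraMap_X]
  have hW0 : W.map (Polynomial.evalRingHom (0:ℚ)) = 1 := by
    ext σ τ
    by_cases h : σ = τ
    · subst h
      simp [hWdef, Matrix.map_apply, MagAux.cdist_eq_zero_iff.mpr rfl, Matrix.one_apply_eq]
    · have hd : cdist σ.1 τ.1 ≠ 0 := fun hc => h (Subtype.ext (MagAux.cdist_eq_zero_iff.mp hc))
      simp [hWdef, Matrix.map_apply, Matrix.one_apply_ne h, Polynomial.eval_pow, zero_pow hd]
  set D : Polynomial ℚ := W.det with hDdef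
  set A : Polynomial ℚ := ∑ σ : Chamber α, ∑ τ : Chamber α, W.adjugate σ τ with hAdef
  have hD0 : D.eval 0 = 1 := by
    have h := RingHom.map_det (Polynomial.evalRingHom (0:ℚ)) W
    rw [RingHom.mapMatrix_apply, hW0, Matrix.det_one] at h
    exact h
  have hA0 : A.eval 0 = (Fintype.card (Chamber α) : ℚ) := by
    have hadj : W.adjugate.map (Polynomial.evalRingHom (0:ℚ))
        = Matrix.adjugate (W.map (Polynomial.evalRingHom (0:ℚ))) := by
      have := RingHom.map_adjugate (Polynomial.evalRingHom (0:ℚ)) W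
      rwa [RingHom.mapMatrix_apply, RingHom.mapMatrix_apply] at this
    have h1 : A.eval 0 = ∑ σ : Chamber α, ∑ τ : Chamber α,
        (W.adjugate.map (Polynomial.evalRingHom (0:ℚ))) σ τ := by
      simp [hAdef, Polynomial.eval_finset_sum, Matrix.map_apply]
    rw [h1, hadj, hW0, Matrix.adjugate_one]
    simp [Matrix.one_apply, Finset.card_univ]
  have hDne : D ≠ 0 := fun h => by simp [h] at hD0
  have hdetV : (varchenko α).det = algebraMap (Polynomial ℚ) (RatFunc ℚ) D := by
    rw [hVW, hDdef]
    have := RingHom.map_det (algebraMap (Polynomial ℚ) (RatFunc ℚ)) W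
    rw [RingHom.mapMatrix_apply] at this
    exact this.symm
  have hdetVne : IsUnit (varchenko α).det := by
    rw [isUnit_iff_ne_zero, hdetV]
    exact RatFunc.algebraMap_ne_zero hDne
  have hinv : (varchenko α)⁻¹ = Ring.inverse (algebraMap (Polynomial ℚ) (RatFunc ℚ) D) •
      (W.adjugate.map (algebraMap (Polynomial ℚ) (RatFunc ℚ))) := by
    rw [Matrix.inv_def, hdetV, hVW]
    congr 1
    have := RingHom.map_adjugate (algebraMap (Polynomial ℚ) (RatFunc ℚ)) W
    rw [RingHom.mapMatrix_apply, RingHom.mapMatrix_apply] at this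
    exact this.symm
  have hMag : Mag α = algebraMap (Polynomial ℚ) (RatFunc ℚ) A
      / algebraMap (Polynomial ℚ) (RatFunc ℚ) D := by
    rw [Mag, hinv]
    simp only [Matrix.smul_apply, Matrix.map_apply, smul_eq_mul, Ring.inverse_eq_inv']
    simp_rw [← Finset.mul_sum, ← map_sum]
    rw [← hAdef, inv_mul_eq_div]
  -- nonvanishing at zero
  haveI hne : Nonempty (Chamber α) := MagAux.chamber_nonempty α hα
  have hcard : (Fintype.card (Chamber α) : ℚ) ≠ 0 := by
    exact_mod_cast Fintype.card_ne_zero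
  have hQne : (Mag α).denom ≠ 0 := RatFunc.denom_ne_zero _
  have hQdvd : (Mag α).denom ∣ D := (RatFunc.denom_dvd hDne).mpr ⟨A, hMag⟩
  have hQ0 : (Mag α).denom.eval 0 ≠ 0 := by
    obtain ⟨R, hR⟩ := hQdvd
    intro h
    rw [hR, Polynomial.eval_mul, h, zero_mul] at hD0
    exact zero_ne_one hD0
  have hcross : (Mag α).num * D = A * (Mag α).denom := by
    apply RatFunc.algebraMap_injective ℚ
    rw [_root_.map_mul, _root_.map_mul]
    rw [← div_eq_div_iff (RatFunc.algebraMap_ne_zero hQne) (RatFunc.algebraMap_ne_zero hDne)]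
    rw [RatFunc.num_div_denom]
    exact hMag
  have hP0 : (Mag α).num.eval 0 ≠ 0 := by
    intro h
    have h2 := congrArg (Polynomial.eval 0) hcross
    rw [Polynomial.eval_mul, Polynomial.eval_mul, h, zero_mul, hA0] at h2
    exact mul_ne_zero hcard hQ0 h2.symm
  have hPne : (Mag α).num ≠ 0 := fun h => hP0 (by rw [h]; simp)
  -- the functional equation
  have h1 : varchenko α * (varchenko α)⁻¹ = 1 := Matrix.mul_nonsing_inv _ hdetVne
  have h2 : (varchenko α).map MagAux.phi * ((varchenko α)⁻¹.map MagAux.phi) = 1 := by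
    rw [← Matrix.map_mul, h1, Matrix.map_one _ (map_zero _) (map_one _)]
  have h3 : (varchenko α).submatrix id (MagAux.chamberNeg α)
      = (RatFunc.X : RatFunc ℚ) ^ Fintype.card ι • (varchenko α).map MagAux.phi := by
    ext σ τ
    simp only [Matrix.submatrix_apply, id_eq, Matrix.smul_apply, smul_eq_mul,
      Matrix.map_apply, varchenko, Matrix.of_apply]
    rw [map_pow, MagAux.phi_X, MagAux.cdist_neg σ τ, inv_pow,
      pow_sub₀ _ hXne (MagAux.cdist_le σ.1 τ.1)]
  have h4 : (varchenko α).submatrix id (MagAux.chamberNeg α)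
      * ((varchenko α)⁻¹.submatrix (MagAux.chamberNeg α) id) = 1 := by
    rw [Matrix.submatrix_mul_equiv, h1, Matrix.submatrix_id_id]
  have hXNne : (RatFunc.X : RatFunc ℚ) ^ Fintype.card ι ≠ 0 := pow_ne_zero _ hXne
  have h5 : (varchenko α).map MagAux.phi *
      ((RatFunc.X : RatFunc ℚ) ^ Fintype.card ι • ((varchenko α)⁻¹.submatrix (MagAux.chamberNeg α) id)) = 1 := by
    have hVphi : (varchenko α).map MagAux.phi
        = ((RatFunc.X : RatFunc ℚ) ^ Fintype.card ι)⁻¹ •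
          (varchenko α).submatrix id (MagAux.chamberNeg α) := by
      rw [h3, smul_smul, inv_mul_cancel₀ hXNne, one_smul]
    rw [hVphi, Matrix.smul_mul, Matrix.mul_smul, smul_smul, inv_mul_cancel₀ hXNne, one_smul, h4]
  have h6 : (varchenko α)⁻¹.map MagAux.phi
      = (RatFunc.X : RatFunc ℚ) ^ Fintype.card ι • ((varchenko α)⁻¹.submatrix (MagAux.chamberNeg α) id) :=
    Matrix.right_inv_eq_right_inv h2 h5
  have hfe : MagAux.phi (Mag α) = (RatFunc.X : RatFunc ℚ) ^ Fintype.card ι * Mag α := by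
    have hl : MagAux.phi (Mag α) = ∑ σ : Chamber α, ∑ τ : Chamber α,
        ((varchenko α)⁻¹.map MagAux.phi) σ τ := by
      rw [Mag, map_sum]
      exact Finset.sum_congr rfl fun σ _ => by rw [map_sum]; rfl
    rw [hl, h6]
    simp only [Matrix.smul_apply, smul_eq_mul, Matrix.submatrix_apply, id_eq]
    simp_rw [← Finset.mul_sum]
    congr 1
    rw [Mag]
    exact Equiv.sum_comp (MagAux.chamberNeg α) fun σ => ∑ τ : Chamber α, (varchenko α)⁻¹ σ τ
  -- degree bookkeeping
  have e1 := MagAux.psi_mul_pow (Mag α).num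
  have e2 := MagAux.psi_mul_pow (Mag α).denom
  have hpsiQ : MagAux.psi (Mag α).denom ≠ 0 := MagAux.psi_ne_zero hQne
  have e3 : MagAux.psi (Mag α).num / MagAux.psi (Mag α).denom
      = ((RatFunc.X : RatFunc ℚ) ^ Fintype.card ι * algebraMap (Polynomial ℚ) (RatFunc ℚ) (Mag α).num)
        / algebraMap (Polynomial ℚ) (RatFunc ℚ) (Mag α).denom := by
    rw [← MagAux.phi_apply, hfe, mul_div_assoc]
    rw [RatFunc.num_div_denom]
  have ecross : MagAux.psi (Mag α).num * algebraMap (Polynomial ℚ) (RatFunc ℚ) (Mag α).denom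
      = (RatFunc.X : RatFunc ℚ) ^ Fintype.card ι * algebraMap (Polynomial ℚ) (RatFunc ℚ) (Mag α).num
        * MagAux.psi (Mag α).denom := by
    rw [div_eq_div_iff hpsiQ (RatFunc.algebraMap_ne_zero hQne)] at e3
    exact e3
  have epoly : (Mag α).num.reverse * (Mag α).denom * Polynomial.X ^ (Mag α).denom.natDegree
      = (Mag α).num * (Mag α).denom.reverse
        * Polynomial.X ^ (Fintype.card ι + (Mag α).num.natDegree) := by
    apply RatFunc.algebraMap_injective ℚ
    simp only [_root_.map_mul, map_pow, RatFunc.algebraMap_X]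
    rw [← e1, ← e2]
    linear_combination (RatFunc.X : RatFunc ℚ) ^ ((Mag α).num.natDegree + (Mag α).denom.natDegree) * ecross
  have hrevP : (Mag α).num.reverse.natDegree = (Mag α).num.natDegree := by
    have h := Polynomial.natDegree_eq_reverse_natDegree_add_natTrailingDegree (Mag α).num
    have ht : (Mag α).num.natTrailingDegree = 0 :=
      Polynomial.natTrailingDegree_eq_zero.mpr
        (Or.inr (by rwa [Polynomial.coeff_zero_eq_eval_zero]))
    omega
  have hrevQ : (Mag α).denom.reverse.natDegree = (Mag α).denom.natDegree := by
    have h := Polynomial.natDegree_eq_reverse_natDegree_add_natTrailingDegree (Mag α).denom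
    have ht : (Mag α).denom.natTrailingDegree = 0 :=
      Polynomial.natTrailingDegree_eq_zero.mpr
        (Or.inr (by rwa [Polynomial.coeff_zero_eq_eval_zero]))
    omega
  have hrevPne : (Mag α).num.reverse ≠ 0 := by
    rwa [ne_eq, Polynomial.reverse_eq_zero]
  have hrevQne : (Mag α).denom.reverse ≠ 0 := by
    rwa [ne_eq, Polynomial.reverse_eq_zero]
  have hXpow : ∀ n : ℕ, (Polynomial.X : Polynomial ℚ) ^ n ≠ 0 :=
    fun n => pow_ne_zero _ Polynomial.X_ne_zero
  have hdeg := congrArg Polynomial.natDegree epoly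
  rw [Polynomial.natDegree_mul (mul_ne_zero hrevPne hQne) (hXpow _),
    Polynomial.natDegree_mul hrevPne hQne,
    Polynomial.natDegree_mul (mul_ne_zero hPne hrevQne) (hXpow _),
    Polynomial.natDegree_mul hPne hrevQne,
    Polynomial.natDegree_X_pow, Polynomial.natDegree_X_pow, hrevP, hrevQ] at hdeg
  omega

end
end

section
/- Let 𝒜₁ be a central hyperplane arrangement given by forms α : ι₁ → (E₁ →ₗ[ℝ] ℝ) and 𝒜₂ one given by forms β : ι₂ → (E₂ →ₗ[ℝ] ℝ). Form the direct-sum arrangement 𝒜₁ ⊕ 𝒜₂ on E₁ × E₂, indexed by ι₁ ⊕ ι₂, whose forms are (x₁,x₂) ↦ α(i)(x₁) for i ∈ ι₁ and (x₁,x₂) ↦ β(j)(x₂) for j ∈ ι₂ (these forms are nonzero with pairwise distinct kernels). Then Mag(𝒜₁ ⊕ 𝒜₂) = Mag(𝒜₁) · Mag(𝒜₂) in ℚ(q). -/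
open Matrix Kronecker

noncomputable section

variable {E : Type*} [AddCommGroup E] [Module ℝ E]

section Aux

open Matrix Kronecker

variable {E₁ E₂ : Type*} [AddCommGroup E₁] [Module ℝ E₁] [AddCommGroup E₂] [Module ℝ E₂]
variable {ι₁ ι₂ : Type*} [Fintype ι₁] [Fintype ι₂]

/-- Chambers of the direct-sum arrangement correspond to pairs of chambers. -/
def chamberSumEquiv (α : ι₁ → (E₁ →ₗ[ℝ] ℝ)) (β : ι₂ → (E₂ →ₗ[ℝ] ℝ)) :
    Chamber (Sum.elim (fun i => (α i).comp (LinearMap.fst ℝ E₁ E₂))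
      (fun j => (β j).comp (LinearMap.snd ℝ E₁ E₂))) ≃ Chamber α × Chamber β where
  toFun σ :=
    ⟨⟨fun i => σ.1 (Sum.inl i), fun i => σ.2.1 (Sum.inl i), by
        obtain ⟨x, hx⟩ := σ.2.2
        exact ⟨x.1, fun i => hx (Sum.inl i)⟩⟩,
     ⟨fun j => σ.1 (Sum.inr j), fun j => σ.2.1 (Sum.inr j), by
        obtain ⟨x, hx⟩ := σ.2.2
        exact ⟨x.2, fun j => hx (Sum.inr j)⟩⟩⟩
  invFun p :=
    ⟨Sum.elim p.1.1 p.2.1, by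
      rintro (i | j)
      · exact p.1.2.1 i
      · exact p.2.2.1 j,
     by
      obtain ⟨x₁, hx₁⟩ := p.1.2.2
      obtain ⟨x₂, hx₂⟩ := p.2.2.2
      refine ⟨(x₁, x₂), ?_⟩
      rintro (i | j)
      · exact hx₁ i
      · exact hx₂ j⟩
  left_inv σ := by
    apply Subtype.ext
    funext k
    cases k <;> rfl
  right_inv p := by
    refine Prod.ext ?_ ?_ <;> apply Subtype.ext <;> rfl

theorem cdist_sum_elim (σ₁ τ₁ : ι₁ → SignType) (σ₂ τ₂ : ι₂ → SignType) :
    cdist (Sum.elim σ₁ σ₂) (Sum.elim τ₁ τ₂) = cdist σ₁ τ₁ + cdist σ₂ τ₂ := by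
  simp only [cdist, Finset.card_filter]
  rw [Fintype.sum_sum_type]
  rfl

theorem varchenko_sum (α : ι₁ → (E₁ →ₗ[ℝ] ℝ)) (β : ι₂ → (E₂ →ₗ[ℝ] ℝ)) :
    varchenko (Sum.elim (fun i => (α i).comp (LinearMap.fst ℝ E₁ E₂))
        (fun j => (β j).comp (LinearMap.snd ℝ E₁ E₂)))
      = (varchenko α ⊗ₖ varchenko β).submatrix (chamberSumEquiv α β) (chamberSumEquiv α β) := by
  ext σ τ
  have h1 : σ.1 = Sum.elim (fun i => σ.1 (Sum.inl i)) (fun j => σ.1 (Sum.inr j)) := by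
    funext k; cases k <;> rfl
  have h2 : τ.1 = Sum.elim (fun i => τ.1 (Sum.inl i)) (fun j => τ.1 (Sum.inr j)) := by
    funext k; cases k <;> rfl
  show (RatFunc.X : RatFunc ℚ) ^ cdist σ.1 τ.1 = _
  rw [h1, h2, cdist_sum_elim, pow_add]
  rfl

theorem sum_sum_kron {m n : Type*} [Fintype m] [Fintype n]
    (A : Matrix m m (RatFunc ℚ)) (B : Matrix n n (RatFunc ℚ)) :
    ∑ p : m × n, ∑ q : m × n, (A ⊗ₖ B) p q =
      (∑ a : m, ∑ c : m, A a c) * (∑ b : n, ∑ d : n, B b d) := by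
  rw [Finset.sum_mul_sum, Fintype.sum_prod_type]
  refine Finset.sum_congr rfl fun a _ => Finset.sum_congr rfl fun b _ => ?_
  rw [Fintype.sum_prod_type, Finset.sum_mul_sum]
  rfl

end Aux

/-- **Magnitude is multiplicative for direct sums of arrangements.** Given arrangements
`𝒜₁` on `E₁` (forms `α`) and `𝒜₂` on `E₂` (forms `β`), the direct-sum arrangement on
`E₁ × E₂`, indexed by `ι₁ ⊕ ι₂` with forms `(x₁,x₂) ↦ α i x₁` and `(x₁,x₂) ↦ β j x₂`,
satisfies `Mag(𝒜₁ ⊕ 𝒜₂) = Mag(𝒜₁) · Mag(𝒜₂)` in `ℚ(q)`. -/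
theorem mag_directSum {E₁ E₂ : Type*} [AddCommGroup E₁] [Module ℝ E₁]
    [AddCommGroup E₂] [Module ℝ E₂] [FiniteDimensional ℝ E₁] [FiniteDimensional ℝ E₂]
    {ι₁ ι₂ : Type*} [Fintype ι₁] [Fintype ι₂]
    (α : ι₁ → (E₁ →ₗ[ℝ] ℝ)) (β : ι₂ → (E₂ →ₗ[ℝ] ℝ))
    (hα : ∀ i, α i ≠ 0) (hβ : ∀ j, β j ≠ 0)
    (hkerα : ∀ i j, LinearMap.ker (α i) = LinearMap.ker (α j) → i = j)
    (hkerβ : ∀ i j, LinearMap.ker (β i) = LinearMap.ker (β j) → i = j) :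
    Mag (Sum.elim (fun i => (α i).comp (LinearMap.fst ℝ E₁ E₂))
          (fun j => (β j).comp (LinearMap.snd ℝ E₁ E₂))) = Mag α * Mag β := by
  classical
  set e := chamberSumEquiv α β
  rw [Mag, varchenko_sum, Matrix.inv_submatrix_equiv, Matrix.inv_kronecker]
  rw [← Equiv.sum_comp e.symm (fun σ => ∑ τ, ((varchenko α)⁻¹ ⊗ₖ (varchenko β)⁻¹).submatrix (⇑e) (⇑e) σ τ)]
  simp only [Matrix.submatrix_apply, Equiv.apply_symm_apply]
  rw [show (∑ p : Chamber α × Chamber β, ∑ τ, ((varchenko α)⁻¹ ⊗ₖ (varchenko β)⁻¹) p (e τ))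
      = ∑ p : Chamber α × Chamber β, ∑ q : Chamber α × Chamber β,
          ((varchenko α)⁻¹ ⊗ₖ (varchenko β)⁻¹) p q from by
    refine Finset.sum_congr rfl fun p _ => ?_
    exact Equiv.sum_comp e (fun q => ((varchenko α)⁻¹ ⊗ₖ (varchenko β)⁻¹) p q)]
  exact sum_sum_kron _ _

end
end

section
/- Let 𝒜 be a central hyperplane arrangement, F a face, D any chamber, and C a chamber with C(i) = F(i) for every i with F(i) ≠ 0. Then the Tits product FD is a chamber (i.e. it is a realizable sign vector in {+1,−1}^ι), and d(D, C) = d(D, FD) + d(FD, C), where d is the Hamming distance. In particular the set of chambers above F is gated in the tope graph, with gate projection D ↦ FD. -/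
open Matrix

noncomputable section

variable {E : Type*} [AddCommGroup E] [Module ℝ E]

/-- **Faces give gated subgraphs of the tope graph.** Let `F` be a face of the
arrangement, `D` any chamber, and `C` a chamber with `C i = F i` whenever `F i ≠ 0`
(i.e. `C` lies above `F`).  Then the Tits product `FD` (equal to `F i` where `F i ≠ 0`
and to `D i` where `F i = 0`) is a chamber, and
`d(D, C) = d(D, FD) + d(FD, C)` for the Hamming distance `d`.  In particular the set of
chambers above `F` is gated with gate projection `D ↦ FD`. -/
theorem face_gated {ι : Type*} [Fintype ι] [FiniteDimensional ℝ E]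
    (α : ι → (E →ₗ[ℝ] ℝ)) (hα : ∀ i, α i ≠ 0)
    (hker : ∀ i j, LinearMap.ker (α i) = LinearMap.ker (α j) → i = j)
    (F : ι → SignType) (hF : IsFace α F)
    (D : ι → SignType) (hD : IsChamber α D)
    (C : ι → SignType) (hC : IsChamber α C)
    (hCF : ∀ i, F i ≠ 0 → C i = F i) :
    IsChamber α (fun i => if F i = 0 then D i else F i) ∧
      cdist D C = cdist D (fun i => if F i = 0 then D i else F i) +
        cdist (fun i => if F i = 0 then D i else F i) C := by
  classical
  obtain ⟨x, hx⟩ := hF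
  obtain ⟨hD0, y, hy⟩ := hD
  constructor
  · refine ⟨fun i => ?_, ?_⟩
    · by_cases h : F i = 0 <;> simp [h, hD0 i]
    · have hev : ∀ i, ∀ᶠ ε : ℝ in nhdsWithin 0 (Set.Ioi 0),
          ((if F i = 0 then D i else F i : SignType) : ℝ) * α i (x + ε • y) > 0 := by
        intro i
        by_cases h : F i = 0
        · have hx0 : α i x = 0 := by
            have := hx i; rw [h] at this; exact sign_eq_zero_iff.mp this
          filter_upwards [self_mem_nhdsWithin] with ε hε
          simp only [h, if_pos]
          rw [map_add, hx0, zero_add, (α i).map_smul, smul_eq_mul, mul_left_comm]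
          exact mul_pos hε (hy i)
        · have hpos : (F i : ℝ) * α i x > 0 := by
            have hsi := hx i
            cases hFi : F i with
            | zero => exact absurd hFi h
            | pos =>
              rw [hFi] at hsi
              have : (0:ℝ) < α i x := sign_eq_one_iff.mp hsi
              simpa [hFi] using this
            | neg =>
              rw [hFi] at hsi
              have : α i x < 0 := sign_eq_neg_one_iff.mp hsi
              simpa [hFi] using by nlinarith
          have hcont : ContinuousAt (fun ε : ℝ => (F i : ℝ) * α i (x + ε • y)) 0 := by
            have heq : (fun ε : ℝ => (F i : ℝ) * α i (x + ε • y)) =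
                fun ε : ℝ => (F i : ℝ) * (α i x + ε * α i y) := by
              funext ε; rw [map_add, (α i).map_smul, smul_eq_mul]
            rw [heq]; fun_prop
          have := hcont.tendsto.eventually (eventually_gt_nhds
            (show (0:ℝ) < (fun ε : ℝ => (F i : ℝ) * α i (x + ε • y)) 0 by simpa using hpos))
          filter_upwards [this.filter_mono nhdsWithin_le_nhds] with ε hε
          simpa [h] using hε
      obtain ⟨ε, hε⟩ := (Filter.eventually_all.mpr hev).exists
      exact ⟨x + ε • y, hε⟩
  · simp only [cdist, Finset.card_filter, ← Finset.sum_add_distrib]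
    refine Finset.sum_congr rfl fun i _ => ?_
    by_cases h : F i = 0
    · simp [h]
    · simp [h, hCF i h]

end
end

section
/- Let 𝒜 be a central hyperplane arrangement, D a chamber, and T ⊆ ι. For a face F set M_D(F) = {i ∈ ι | F(i) ≠ D(i)} (indices where F is 0 or has the sign opposite to D). Then Σ over all faces F with T ⊆ M_D(F) of (−1)^{codim F} equals 1 if T = ∅ and equals 0 if T ≠ ∅. -/
set_option linter.unusedSectionVars false
set_option linter.unusedVariables false


open Matrix

noncomputable section

variable {E : Type*} [AddCommGroup E] [Module ℝ E]

/-! ### Auxiliary lemmas -/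

noncomputable instance faceDecEq {ι : Type*} (α : ι → (E →ₗ[ℝ] ℝ)) :
    DecidableEq (Face α) := Classical.decEq _

lemma sign_add_right {a b : ℝ} (h : |b| < |a|) : SignType.sign (a + b) = SignType.sign a := by
  obtain ⟨h1, h2⟩ := abs_lt.mp h
  rcases lt_trichotomy a 0 with ha | rfl | ha
  · rw [abs_of_neg ha] at h1 h2
    rw [sign_neg ha, sign_neg (by linarith)]
  · exfalso; rw [abs_zero] at h; linarith [abs_nonneg b]
  · rw [abs_of_pos ha] at h1 h2
    rw [sign_pos ha, sign_pos (by linarith)]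

lemma sign_combo {s : SignType} {a b c d : ℝ} (ha : SignType.sign a = s)
    (hb : SignType.sign b = s) (hc : 0 < c) (hd : 0 < d) :
    SignType.sign (c * a + d * b) = s := by
  cases s with
  | zero =>
      show SignType.sign (c * a + d * b) = 0
      rw [show SignType.zero = 0 from rfl] at ha hb
      rw [sign_eq_zero_iff] at ha hb ⊢
      rw [ha, hb]; ring
  | pos =>
      show SignType.sign (c * a + d * b) = 1
      rw [show SignType.pos = 1 from rfl] at ha hb
      rw [sign_eq_one_iff] at ha hb ⊢
      have := mul_pos hc ha
      have := mul_pos hd hb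
      linarith
  | neg =>
      show SignType.sign (c * a + d * b) = -1
      rw [show SignType.neg = -1 from rfl] at ha hb
      rw [sign_eq_neg_one_iff] at ha hb ⊢
      have := mul_pos hc (neg_pos.mpr ha)
      have := mul_pos hd (neg_pos.mpr hb)
      nlinarith

/-- The realization set of a sign vector. -/
def Sset {ι : Type*} (α : ι → (E →ₗ[ℝ] ℝ)) (F : ι → SignType) : Set E :=
  {x | ∀ i, SignType.sign (α i x) = F i}

lemma mem_Sset_zero {ι : Type*} {α : ι → (E →ₗ[ℝ] ℝ)} {G : ι → SignType}
    {x : E} (hx : x ∈ Sset α G) {i : ι} (hi : G i = 0) : α i x = 0 := by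
  have := hx i; rwa [hi, sign_eq_zero_iff] at this

lemma perturb {ι : Type*} [Fintype ι] {α : ι → (E →ₗ[ℝ] ℝ)} {F : ι → SignType} {x w : E}
    (hx : x ∈ Sset α F) (hw : ∀ i, F i = 0 → α i w = 0) :
    ∃ ε : ℝ, 0 < ε ∧ x + ε • w ∈ Sset α F := by
  classical
  set M := Finset.univ.filter (fun i => F i ≠ 0) with hM
  have key : ∀ ε : ℝ, 0 < ε → (∀ i ∈ M, ε * (|α i w| + 1) ≤ |α i x|) → x + ε • w ∈ Sset α F := by
    intro ε hε hbd i
    by_cases h0 : F i = 0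
    · have hx0 : α i x = 0 := mem_Sset_zero hx h0
      simp [Sset, map_add, LinearMap.map_smul, hx0, hw i h0, h0]
    · have hiM : i ∈ M := Finset.mem_filter.mpr ⟨Finset.mem_univ _, h0⟩
      have hax : (0:ℝ) < |α i x| := by
        rw [abs_pos]
        exact fun hz => h0 (by rw [← hx i, hz, sign_zero])
      have hb : |ε * α i w| < |α i x| := by
        rw [abs_mul, abs_of_pos hε]
        have h2 := hbd i hiM
        nlinarith [abs_nonneg (α i w)]
      have heval : α i (x + ε • w) = α i x + ε * α i w := by
        rw [map_add, LinearMap.map_smul]; rfl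
      show SignType.sign (α i (x + ε • w)) = F i
      rw [heval, sign_add_right hb, hx i]
  by_cases hne : M.Nonempty
  · set ε := M.inf' hne (fun i => |α i x| / (|α i w| + 1)) with hε
    have hεpos : 0 < ε := by
      rw [hε, Finset.lt_inf'_iff]
      intro i hi
      have hFi : F i ≠ 0 := (Finset.mem_filter.mp hi).2
      have hax : α i x ≠ 0 := fun hz => hFi (by rw [← hx i, hz, sign_zero])
      have : (0:ℝ) < |α i x| := abs_pos.mpr hax
      positivity
    refine ⟨ε, hεpos, key ε hεpos fun i hi => ?_⟩
    have h1 : ε ≤ |α i x| / (|α i w| + 1) := Finset.inf'_le _ hi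
    have hpos : (0:ℝ) < |α i w| + 1 := by positivity
    calc ε * (|α i w| + 1) ≤ (|α i x| / (|α i w| + 1)) * (|α i w| + 1) :=
          mul_le_mul_of_nonneg_right h1 hpos.le
      _ = |α i x| := by field_simp
  · refine ⟨1, one_pos, key 1 one_pos fun i hi => absurd ⟨i, hi⟩ hne⟩

lemma dichotomy {ι : Type*} [Fintype ι] {α : ι → (E →ₗ[ℝ] ℝ)} {G : ι → SignType}
    (β : E →ₗ[ℝ] ℝ) :
    ((∃ x ∈ Sset α G, 0 < β x) ∧ (∃ y ∈ Sset α G, β y < 0)) ∨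
      ∃ s : SignType, ∀ x ∈ Sset α G, SignType.sign (β x) = s := by
  by_cases hpos : ∃ x ∈ Sset α G, 0 < β x
  · by_cases hneg : ∃ y ∈ Sset α G, β y < 0
    · exact Or.inl ⟨hpos, hneg⟩
    · push_neg at hneg
      obtain ⟨x, hxS, hx⟩ := hpos
      refine Or.inr ⟨1, fun z hz => ?_⟩
      rcases eq_or_lt_of_le (hneg z hz) with h0 | h0
      · exfalso
        obtain ⟨ε, hε, hzS⟩ := perturb hz (w := z - x) (fun i hi => by
          rw [map_sub, mem_Sset_zero hz hi, mem_Sset_zero hxS hi, sub_zero])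
        have hle := hneg _ hzS
        rw [map_add, LinearMap.map_smul, smul_eq_mul, map_sub] at hle
        nlinarith
      · exact sign_pos h0
  · push_neg at hpos
    by_cases hneg : ∃ y ∈ Sset α G, β y < 0
    · obtain ⟨y, hyS, hy⟩ := hneg
      refine Or.inr ⟨-1, fun z hz => ?_⟩
      rcases lt_or_eq_of_le (hpos z hz) with h0 | h0
      · exact sign_neg h0
      · exfalso
        obtain ⟨ε, hε, hzS⟩ := perturb hz (w := z - y) (fun i hi => by
          rw [map_sub, mem_Sset_zero hz hi, mem_Sset_zero hyS hi, sub_zero])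
        have hle := hpos _ hzS
        rw [map_add, LinearMap.map_smul, smul_eq_mul, map_sub] at hle
        nlinarith
    · push_neg at hneg
      refine Or.inr ⟨0, fun z hz => ?_⟩
      have : β z = 0 := le_antisymm (hpos z hz) (hneg z hz)
      rw [this, sign_zero]

/-- The deleted arrangement. -/
def restrArr {ι : Type*} (α : ι → (E →ₗ[ℝ] ℝ)) (i0 : ι) : {i : ι // i ≠ i0} → (E →ₗ[ℝ] ℝ) :=
  fun j => α j.1

/-- Extension of a sign vector on `ι \ {i0}` by the value `s` at `i0`. -/
def extSign {ι : Type*} [DecidableEq ι] (i0 : ι) (G : {i : ι // i ≠ i0} → SignType)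
    (s : SignType) : ι → SignType :=
  fun i => if h : i = i0 then s else G ⟨i, h⟩

@[simp] lemma extSign_apply_self {ι : Type*} [DecidableEq ι] (i0 : ι)
    (G : {i : ι // i ≠ i0} → SignType) (s : SignType) :
    extSign i0 G s i0 = s := dif_pos rfl

@[simp] lemma extSign_apply_ne {ι : Type*} [DecidableEq ι] (i0 : ι)
    (G : {i : ι // i ≠ i0} → SignType) (s : SignType)
    (j : {i : ι // i ≠ i0}) : extSign i0 G s j.1 = G j := by
  rw [extSign, dif_neg j.2]

lemma mem_Sset_ext_iff {ι : Type*} [DecidableEq ι] {α : ι → (E →ₗ[ℝ] ℝ)} {i0 : ι}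
    {G : {i : ι // i ≠ i0} → SignType} {s : SignType} {x : E} :
    x ∈ Sset α (extSign i0 G s) ↔ x ∈ Sset (restrArr α i0) G ∧ SignType.sign (α i0 x) = s := by
  constructor
  · intro h
    refine ⟨fun j => ?_, ?_⟩
    · have := h j.1
      rwa [extSign_apply_ne] at this
    · have := h i0
      rwa [extSign_apply_self] at this
  · rintro ⟨h1, h2⟩ i
    by_cases h : i = i0
    · subst h; rwa [extSign_apply_self]
    · rw [show i = (⟨i, h⟩ : {i : ι // i ≠ i0}).1 from rfl, extSign_apply_ne]
      exact h1 ⟨i, h⟩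

lemma flat_ext_ne {ι : Type*} [Fintype ι] [DecidableEq ι] (α : ι → (E →ₗ[ℝ] ℝ)) (i0 : ι)
    (G : {i : ι // i ≠ i0} → SignType) {s : SignType} (hs : s ≠ 0) :
    (⨅ i ∈ {i | extSign i0 G s i = 0}, LinearMap.ker (α i) : Submodule ℝ E) =
      (⨅ j ∈ {j : {i : ι // i ≠ i0} | G j = 0}, LinearMap.ker (α j.1) : Submodule ℝ E) := by
  apply le_antisymm
  · refine le_iInf₂ fun j hj => ?_
    refine iInf₂_le j.1 ?_
    show extSign i0 G s j.1 = 0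
    rw [extSign_apply_ne]; exact hj
  · refine le_iInf₂ fun i hi => ?_
    have hi' : extSign i0 G s i = 0 := hi
    by_cases h : i = i0
    · exfalso; rw [h, extSign_apply_self] at hi'; exact hs hi'
    · have hG : G ⟨i, h⟩ = 0 := by rw [← extSign_apply_ne i0 G s ⟨i, h⟩]; exact hi'
      exact iInf₂_le (⟨i, h⟩ : {i : ι // i ≠ i0}) hG

lemma flat_ext_zero {ι : Type*} [Fintype ι] [DecidableEq ι] (α : ι → (E →ₗ[ℝ] ℝ)) (i0 : ι)
    (G : {i : ι // i ≠ i0} → SignType) :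
    (⨅ i ∈ {i | extSign i0 G 0 i = 0}, LinearMap.ker (α i) : Submodule ℝ E) =
      LinearMap.ker (α i0) ⊓
        (⨅ j ∈ {j : {i : ι // i ≠ i0} | G j = 0}, LinearMap.ker (α j.1) : Submodule ℝ E) := by
  apply le_antisymm
  · refine le_inf (iInf₂_le i0 (extSign_apply_self i0 G 0)) ?_
    refine le_iInf₂ fun j hj => ?_
    refine iInf₂_le j.1 ?_
    show extSign i0 G 0 j.1 = 0
    rw [extSign_apply_ne]; exact hj
  · refine le_iInf₂ fun i hi => ?_
    have hi' : extSign i0 G 0 i = 0 := hi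
    by_cases h : i = i0
    · subst h; exact inf_le_left
    · have hG : G ⟨i, h⟩ = 0 := by rw [← extSign_apply_ne i0 G 0 ⟨i, h⟩]; exact hi'
      exact inf_le_right.trans (iInf₂_le (⟨i, h⟩ : {i : ι // i ≠ i0}) hG)

lemma finrank_inf_ker [FiniteDimensional ℝ E] {W : Submodule ℝ E} {β : E →ₗ[ℝ] ℝ} {x : E}
    (hx : x ∈ W) (hβx : β x ≠ 0) :
    Module.finrank ℝ (LinearMap.ker β ⊓ W : Submodule ℝ E) + 1 = Module.finrank ℝ W := by
  set φ := β.domRestrict W with hφ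
  have hker : LinearMap.ker φ = Submodule.comap W.subtype (LinearMap.ker β ⊓ W) := by
    ext y
    simp [hφ, LinearMap.mem_ker, Submodule.mem_comap, y.2]
  have h1 : Module.finrank ℝ (LinearMap.ker φ) =
      Module.finrank ℝ (LinearMap.ker β ⊓ W : Submodule ℝ E) := by
    rw [hker]
    exact LinearEquiv.finrank_eq (Submodule.comapSubtypeEquivOfLe inf_le_right)
  have h2 : Module.finrank ℝ (LinearMap.range φ) = 1 := by
    have hle : Module.finrank ℝ (LinearMap.range φ) ≤ 1 := by
      have := Submodule.finrank_le (LinearMap.range φ)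
      simpa using this
    have hpos : 0 < Module.finrank ℝ (LinearMap.range φ) := by
      rw [Module.finrank_pos_iff]
      refine nontrivial_of_ne (⟨β x, ⟨⟨x, hx⟩, rfl⟩⟩ : LinearMap.range φ) 0 ?_
      intro hcon
      apply hβx
      simpa using congrArg Subtype.val hcon
    omega
  have h3 := LinearMap.finrank_range_add_finrank_ker φ
  omega

lemma Sset_subset_flat {ι : Type*} {α : ι → (E →ₗ[ℝ] ℝ)} {G : ι → SignType} {x : E}
    (hx : x ∈ Sset α G) :
    x ∈ (⨅ j ∈ {j | G j = 0}, LinearMap.ker (α j) : Submodule ℝ E) := by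
  simp only [Submodule.mem_iInf, Set.mem_setOf_eq, LinearMap.mem_ker]
  intro j hj
  exact mem_Sset_zero hx hj

lemma flat_le_ker {ι : Type*} [Fintype ι] {α : ι → (E →ₗ[ℝ] ℝ)} {G : ι → SignType}
    (hne : (Sset α G).Nonempty) {β : E →ₗ[ℝ] ℝ} (hβ : ∀ x ∈ Sset α G, β x = 0) :
    (⨅ j ∈ {j | G j = 0}, LinearMap.ker (α j) : Submodule ℝ E) ≤ LinearMap.ker β := by
  intro w hw
  simp only [Submodule.mem_iInf, Set.mem_setOf_eq, LinearMap.mem_ker] at hw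
  obtain ⟨x, hx⟩ := hne
  obtain ⟨ε, hε, hxw⟩ := perturb hx hw
  have h1 := hβ x hx
  have h2 := hβ _ hxw
  rw [map_add, LinearMap.map_smul, smul_eq_mul, h1, zero_add] at h2
  rw [LinearMap.mem_ker]
  rcases mul_eq_zero.mp h2 with h | h
  · exact absurd h (ne_of_gt hε)
  · exact h

lemma codim_ext_ne {ι : Type*} [Fintype ι] [DecidableEq ι] (α : ι → (E →ₗ[ℝ] ℝ)) (i0 : ι)
    (G : {i : ι // i ≠ i0} → SignType) {s : SignType} (hs : s ≠ 0) :
    codim α (extSign i0 G s) = codim (restrArr α i0) G := by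
  unfold codim
  rw [flat_ext_ne α i0 G hs]
  rfl

lemma codim_ext_zero_const {ι : Type*} [Fintype ι] [DecidableEq ι] (α : ι → (E →ₗ[ℝ] ℝ))
    (i0 : ι) {G : {i : ι // i ≠ i0} → SignType}
    (hne : (Sset (restrArr α i0) G).Nonempty)
    (hβ : ∀ x ∈ Sset (restrArr α i0) G, α i0 x = 0) :
    codim α (extSign i0 G 0) = codim (restrArr α i0) G := by
  unfold codim
  rw [flat_ext_zero α i0 G]
  have h := inf_eq_right.mpr (flat_le_ker hne hβ)
  simp only [restrArr] at h ⊢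
  rw [h]
  rfl

lemma codim_ext_zero_cut {ι : Type*} [Fintype ι] [DecidableEq ι] [FiniteDimensional ℝ E]
    (α : ι → (E →ₗ[ℝ] ℝ)) (i0 : ι) {G : {i : ι // i ≠ i0} → SignType} {x : E}
    (hx : x ∈ Sset (restrArr α i0) G) (hβx : α i0 x ≠ 0) :
    codim α (extSign i0 G 0) = codim (restrArr α i0) G + 1 := by
  have hxflat := Sset_subset_flat hx
  have hdrop := finrank_inf_ker hxflat hβx
  have hle := Submodule.finrank_le
    (⨅ j ∈ {j : {i : ι // i ≠ i0} | G j = 0}, LinearMap.ker (restrArr α i0 j) : Submodule ℝ E)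
  unfold codim
  rw [flat_ext_zero α i0 G]
  simp only [restrArr] at hdrop hle ⊢
  have hdrop' : Module.finrank ℝ (LinearMap.ker (α i0) ⊓ (⨅ j ∈ {j : {i : ι // i ≠ i0} | G j = 0}, LinearMap.ker (α j.1) : Submodule ℝ E) : Submodule ℝ E) + 1 = Module.finrank ℝ (⨅ j ∈ {j : {i : ι // i ≠ i0} | G j = 0}, LinearMap.ker (α j.1) : Submodule ℝ E) := hdrop
  have hle' : Module.finrank ℝ (⨅ j ∈ {j : {i : ι // i ≠ i0} | G j = 0}, LinearMap.ker (α j.1) : Submodule ℝ E) ≤ Module.finrank ℝ E := hle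
  change Module.finrank ℝ E - Module.finrank ℝ (LinearMap.ker (α i0) ⊓ (⨅ j ∈ {j : {i : ι // i ≠ i0} | G j = 0}, LinearMap.ker (α j.1) : Submodule ℝ E) : Submodule ℝ E) = (Module.finrank ℝ E - Module.finrank ℝ (⨅ j ∈ {j : {i : ι // i ≠ i0} | G j = 0}, LinearMap.ker (α j.1) : Submodule ℝ E)) + 1
  omega

/-- Restriction of a face of `α` to the deleted arrangement. -/
def faceRestrict {ι : Type*} (α : ι → (E →ₗ[ℝ] ℝ)) (i0 : ι) (F : Face α) :
    Face (restrArr α i0) :=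
  ⟨fun j => F.1 j.1, by obtain ⟨x, hx⟩ := F.2; exact ⟨x, fun j => hx j.1⟩⟩


lemma fiber_sum {ι : Type*} [Fintype ι] [DecidableEq ι] [FiniteDimensional ℝ E]
    (α : ι → (E →ₗ[ℝ] ℝ)) (i0 : ι) (D : ι → SignType) (U : Finset ι) (hi0 : i0 ∉ U)
    (G : Face (restrArr α i0)) :
    (∑ F ∈ Finset.univ.filter (fun F : Face α => faceRestrict α i0 F = G),
        (if ∀ i ∈ U, F.1 i = D i then ((-1 : ℤ) ^ codim α F.1) else 0)) =
      (if ∀ j ∈ U.subtype (· ≠ i0), G.1 j = D j.1 then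
        ((-1 : ℤ) ^ codim (restrArr α i0) G.1) else 0) := by
  have hGne : (Sset (restrArr α i0) G.1).Nonempty := G.2
  set β := α i0 with hβdef
  -- condition transfer
  have hcond : ∀ F : Face α, faceRestrict α i0 F = G →
      ((∀ i ∈ U, F.1 i = D i) ↔ (∀ j ∈ U.subtype (· ≠ i0), G.1 j = D j.1)) := by
    intro F hF
    have hrev : ∀ j : {i : ι // i ≠ i0}, F.1 j.1 = G.1 j := by
      intro j; rw [← hF]; rfl
    constructor
    · intro h j hj
      rw [← hrev j]; exact h j.1 (Finset.mem_subtype.mp hj)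
    · intro h i hiU
      have hne : i ≠ i0 := fun he => hi0 (he ▸ hiU)
      have := h ⟨i, hne⟩ (Finset.mem_subtype.mpr hiU)
      rw [hrev ⟨i, hne⟩]; exact this
  -- every fiber element is an extension
  have hextF : ∀ F : Face α, faceRestrict α i0 F = G → F.1 = extSign i0 G.1 (F.1 i0) := by
    intro F hF
    funext i
    by_cases h : i = i0
    · subst h; rw [extSign_apply_self]
    · rw [show i = (⟨i, h⟩ : {i : ι // i ≠ i0}).1 from rfl, extSign_apply_ne, ← hF]; rfl
  rcases dichotomy (α := restrArr α i0) (G := G.1) β with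
    ⟨⟨x, hxS, hx⟩, ⟨y, hyS, hy⟩⟩ | ⟨s, hs⟩
  · -- cut case
    have hd : (0:ℝ) < β x - β y := by linarith
    set c := β x / (β x - β y) with hc
    set d := -β y / (β x - β y) with hdd
    have hcpos : 0 < c := div_pos hx hd
    have hdpos : 0 < d := div_pos (neg_pos.mpr hy) hd
    set z := c • y + d • x with hz
    have hzS : z ∈ Sset (restrArr α i0) G.1 := by
      intro j
      have heval : restrArr α i0 j z =
          c * (restrArr α i0 j y) + d * (restrArr α i0 j x) := by
        rw [hz, map_add, LinearMap.map_smul, LinearMap.map_smul]; rfl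
      rw [heval]
      exact sign_combo (hyS j) (hxS j) hcpos hdpos
    have hβz : β z = 0 := by
      rw [hz, map_add, LinearMap.map_smul, LinearMap.map_smul, smul_eq_mul, smul_eq_mul,
        hc, hdd]
      field_simp
      ring
    have hfp : IsFace α (extSign i0 G.1 1) :=
      ⟨x, mem_Sset_ext_iff.mpr ⟨hxS, sign_pos hx⟩⟩
    have hf0 : IsFace α (extSign i0 G.1 0) :=
      ⟨z, mem_Sset_ext_iff.mpr ⟨hzS, by rw [hβz, sign_zero]⟩⟩
    have hfm : IsFace α (extSign i0 G.1 (-1)) :=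
      ⟨y, mem_Sset_ext_iff.mpr ⟨hyS, sign_neg hy⟩⟩
    set Fp : Face α := ⟨extSign i0 G.1 1, hfp⟩ with hFp
    set F0 : Face α := ⟨extSign i0 G.1 0, hf0⟩ with hF0
    set Fm : Face α := ⟨extSign i0 G.1 (-1), hfm⟩ with hFm
    have hrFp : faceRestrict α i0 Fp = G :=
      Subtype.ext (funext fun j => extSign_apply_ne i0 G.1 1 j)
    have hrF0 : faceRestrict α i0 F0 = G :=
      Subtype.ext (funext fun j => extSign_apply_ne i0 G.1 0 j)
    have hrFm : faceRestrict α i0 Fm = G :=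
      Subtype.ext (funext fun j => extSign_apply_ne i0 G.1 (-1) j)
    have hfilter : Finset.univ.filter (fun F : Face α => faceRestrict α i0 F = G)
        = {Fp, F0, Fm} := by
      ext F
      simp only [Finset.mem_filter, Finset.mem_univ, true_and, Finset.mem_insert,
        Finset.mem_singleton]
      constructor
      · intro hF
        have hext := hextF F hF
        rcases hsign : F.1 i0 with _ | _ | _
        · right; left
          apply Subtype.ext
          rw [hext, hsign]; rfl
        · right; right
          apply Subtype.ext
          rw [hext, hsign]; rfl
        · left
          apply Subtype.ext
          rw [hext, hsign]; rfl
      · rintro (rfl | rfl | rfl)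
        · exact hrFp
        · exact hrF0
        · exact hrFm
    have hne1 : Fp ≠ F0 := by
      intro h
      have := congrArg (fun W : Face α => W.1 i0) h
      simp only [hFp, hF0, extSign_apply_self] at this
      exact absurd this (by decide)
    have hne2 : Fp ≠ Fm := by
      intro h
      have := congrArg (fun W : Face α => W.1 i0) h
      simp only [hFp, hFm, extSign_apply_self] at this
      exact absurd this (by decide)
    have hne3 : F0 ≠ Fm := by
      intro h
      have := congrArg (fun W : Face α => W.1 i0) h
      simp only [hF0, hFm, extSign_apply_self] at this
      exact absurd this (by decide)
    rw [hfilter, Finset.sum_insert (by simp [hne1, hne2]),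
      Finset.sum_insert (by simp [hne3]), Finset.sum_singleton]
    have ep : codim α Fp.1 = codim (restrArr α i0) G.1 :=
      codim_ext_ne α i0 G.1 (by decide)
    have e0 : codim α F0.1 = codim (restrArr α i0) G.1 + 1 :=
      codim_ext_zero_cut α i0 hxS (ne_of_gt hx)
    have em : codim α Fm.1 = codim (restrArr α i0) G.1 :=
      codim_ext_ne α i0 G.1 (by decide)
    by_cases hU : ∀ j ∈ U.subtype (· ≠ i0), G.1 j = D j.1
    · rw [if_pos ((hcond Fp hrFp).mpr hU), if_pos ((hcond F0 hrF0).mpr hU),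
        if_pos ((hcond Fm hrFm).mpr hU), if_pos hU, ep, e0, em]
      ring
    · rw [if_neg (fun h => hU ((hcond Fp hrFp).mp h)),
        if_neg (fun h => hU ((hcond F0 hrF0).mp h)),
        if_neg (fun h => hU ((hcond Fm hrFm).mp h)), if_neg hU]
      ring
  · -- constant-sign case
    obtain ⟨x0, hx0⟩ := id hGne
    have hfs : IsFace α (extSign i0 G.1 s) :=
      ⟨x0, mem_Sset_ext_iff.mpr ⟨hx0, hs x0 hx0⟩⟩
    set Fs : Face α := ⟨extSign i0 G.1 s, hfs⟩ with hFs
    have hrFs : faceRestrict α i0 Fs = G :=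
      Subtype.ext (funext fun j => extSign_apply_ne i0 G.1 s j)
    have hfilter : Finset.univ.filter (fun F : Face α => faceRestrict α i0 F = G)
        = {Fs} := by
      ext F
      simp only [Finset.mem_filter, Finset.mem_univ, true_and, Finset.mem_singleton]
      constructor
      · intro hF
        have hext := hextF F hF
        have hFi0 : F.1 i0 = s := by
          obtain ⟨w, hw⟩ := F.2
          have hwS : w ∈ Sset (restrArr α i0) G.1 := by
            intro j
            have : F.1 j.1 = G.1 j := by rw [← hF]; rfl
            rw [← this]
            exact hw j.1
          rw [← hw i0]
          exact hs w hwS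
        apply Subtype.ext
        rw [hext, hFi0]
      · rintro rfl; exact hrFs
    rw [hfilter, Finset.sum_singleton]
    have ecs : codim α Fs.1 = codim (restrArr α i0) G.1 := by
      by_cases h0 : s = 0
      · subst h0
        exact codim_ext_zero_const α i0 hGne (fun x hx => by
          have := hs x hx; rwa [sign_eq_zero_iff] at this)
      · exact codim_ext_ne α i0 G.1 h0
    rw [ecs]
    exact if_congr (hcond Fs hrFs) rfl rfl

lemma chamber_isFace {ι : Type*} {α : ι → (E →ₗ[ℝ] ℝ)} {D : ι → SignType}
    (hD : IsChamber α D) : IsFace α D := by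
  obtain ⟨x, hx⟩ := hD.2
  refine ⟨x, fun i => ?_⟩
  rcases hsi : D i with _ | _ | _
  · exact absurd hsi (hD.1 i)
  · have h1 := hx i
    rw [hsi] at h1
    have h2 : (-1 : ℝ) * α i x > 0 := h1
    have : α i x < 0 := by linarith
    rw [sign_neg this]; rfl
  · have h1 := hx i
    rw [hsi] at h1
    have h2 : (1 : ℝ) * α i x > 0 := h1
    have : 0 < α i x := by linarith
    rw [sign_pos this]; rfl

lemma codim_chamber {ι : Type*} {α : ι → (E →ₗ[ℝ] ℝ)} {D : ι → SignType}
    [FiniteDimensional ℝ E] (hD : IsChamber α D) : codim α D = 0 := by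
  have hzero : {i | D i = 0} = (∅ : Set ι) := by
    ext i; simp [hD.1 i]
  unfold codim
  rw [hzero]
  rw [iInf_emptyset]
  rw [finrank_top]
  exact Nat.sub_self _

lemma keyC [FiniteDimensional ℝ E] :
    ∀ (k : ℕ) {ι : Type*} [Fintype ι] [DecidableEq ι] (α : ι → (E →ₗ[ℝ] ℝ))
      (D : ι → SignType), IsChamber α D → ∀ U : Finset ι,
      (Finset.univ \ U).card = k →
      (∑ F : Face α, if ∀ i ∈ U, F.1 i = D i then ((-1 : ℤ) ^ codim α F.1) else 0) = 1 := by
  intro k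
  induction k with
  | zero =>
      intro ι _ _ α D hD U hU
      have hUuniv : U = Finset.univ := by
        rw [← Finset.univ_subset_iff]
        intro i hi
        by_contra hc
        have hmem : i ∈ Finset.univ \ U := Finset.mem_sdiff.mpr ⟨hi, hc⟩
        rw [Finset.card_eq_zero.mp hU] at hmem
        exact absurd hmem (Finset.notMem_empty i)
      subst hUuniv
      let DF : Face α := ⟨D, chamber_isFace hD⟩
      have hother : ∀ F : Face α, F ∈ Finset.univ → F ≠ DF →
          (if ∀ i ∈ Finset.univ, F.1 i = D i then ((-1 : ℤ) ^ codim α F.1) else 0) = 0 := by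
        intro F _ hne
        rw [if_neg]
        intro hcondF
        apply hne
        apply Subtype.ext
        have hDF : DF.1 = D := rfl
        rw [hDF]
        exact funext fun i => hcondF i (Finset.mem_univ i)
      rw [Finset.sum_eq_single_of_mem DF (Finset.mem_univ DF) hother]
      have hDF : DF.1 = D := rfl
      rw [if_pos (fun i _ => by rw [hDF])]
      rw [show codim α DF.1 = 0 from by rw [hDF]; exact codim_chamber hD]
      exact pow_zero _
  | succ k ih =>
      intro ι _ _ α D hD U hU
      have hex : (Finset.univ \ U).Nonempty := Finset.card_pos.mp (by rw [hU]; exact k.succ_pos)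
      obtain ⟨i0, hi0m⟩ := hex
      have hi0 : i0 ∉ U := (Finset.mem_sdiff.mp hi0m).2
      have hD' : IsChamber (restrArr α i0) (fun j => D j.1) := by
        obtain ⟨x, hx⟩ := hD.2
        exact ⟨fun j => hD.1 j.1, ⟨x, fun j => hx j.1⟩⟩
      have hcard : ((Finset.univ : Finset {i : ι // i ≠ i0}) \ U.subtype (· ≠ i0)).card = k := by
        have h1 : (U.subtype (· ≠ i0)).card = U.card := by
          rw [Finset.card_subtype]
          congr 1
          exact Finset.filter_eq_self.mpr (fun x hx hxe => hi0 (hxe ▸ hx))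
        have h2 : (Finset.univ : Finset {i : ι // i ≠ i0}).card = Fintype.card ι - 1 := by
          rw [Finset.card_univ, Fintype.card_subtype_compl (fun i => i = i0),
            Fintype.card_subtype_eq]
        have h3 : (Finset.univ \ U).card = Fintype.card ι - U.card := by
          rw [Finset.card_sdiff_of_subset (Finset.subset_univ U), Finset.card_univ]
        have h4 : U.card ≤ Fintype.card ι := Finset.card_le_univ U
        have h5 : 0 < Fintype.card ι := Fintype.card_pos_iff.mpr ⟨i0⟩
        rw [h3] at hU
        rw [Finset.card_sdiff_of_subset (Finset.subset_univ _), h1, h2]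
        omega
      rw [← Finset.sum_fiberwise_of_maps_to (g := faceRestrict α i0)
        (fun F _ => Finset.mem_univ _)
        (fun F : Face α => if ∀ i ∈ U, F.1 i = D i then ((-1 : ℤ) ^ codim α F.1) else 0)]
      rw [Finset.sum_congr rfl (fun G _ => fiber_sum α i0 D U hi0 G)]
      exact ih (restrArr α i0) (fun j => D j.1) hD' (U.subtype (· ≠ i0)) hcard

lemma keyA {ι : Type*} [Fintype ι] [DecidableEq ι] [FiniteDimensional ℝ E]
    (α : ι → (E →ₗ[ℝ] ℝ)) (D : ι → SignType) (hD : IsChamber α D) :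
    ∀ T U : Finset ι, Disjoint T U →
      (∑ F : Face α, if (∀ i ∈ T, F.1 i ≠ D i) ∧ (∀ i ∈ U, F.1 i = D i) then
          ((-1 : ℤ) ^ codim α F.1) else 0) = if T = ∅ then 1 else 0 := by
  intro T
  induction T using Finset.induction_on with
  | empty =>
      intro U hTU
      rw [if_pos rfl]
      rw [show (fun F : Face α => if (∀ i ∈ (∅ : Finset ι), F.1 i ≠ D i) ∧
          (∀ i ∈ U, F.1 i = D i) then ((-1 : ℤ) ^ codim α F.1) else 0) =
        (fun F : Face α => if (∀ i ∈ U, F.1 i = D i) then ((-1 : ℤ) ^ codim α F.1) else 0)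
        from funext fun F => by simp]
      exact keyC (Finset.univ \ U).card α D hD U rfl
  | @insert a T ha ih =>
      intro U hdisj
      have haU : a ∉ U := fun h =>
        (Finset.disjoint_left.mp hdisj (Finset.mem_insert_self a T)) h
      have hTU : Disjoint T U :=
        Finset.disjoint_left.mpr (fun {i} hi =>
          Finset.disjoint_left.mp hdisj (Finset.mem_insert_of_mem hi))
      have hTU' : Disjoint T (insert a U) := by
        rw [Finset.disjoint_insert_right]
        exact ⟨ha, hTU⟩
      have hsplit : (∑ F : Face α, if (∀ i ∈ insert a T, F.1 i ≠ D i) ∧ (∀ i ∈ U, F.1 i = D i)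
            then ((-1 : ℤ) ^ codim α F.1) else 0) =
          (∑ F : Face α, if (∀ i ∈ T, F.1 i ≠ D i) ∧ (∀ i ∈ U, F.1 i = D i)
            then ((-1 : ℤ) ^ codim α F.1) else 0) -
          (∑ F : Face α, if (∀ i ∈ T, F.1 i ≠ D i) ∧ (∀ i ∈ insert a U, F.1 i = D i)
            then ((-1 : ℤ) ^ codim α F.1) else 0) := by
        rw [← Finset.sum_sub_distrib]
        apply Finset.sum_congr rfl
        intro F _
        by_cases h1 : F.1 a = D a <;>
          by_cases h2 : (∀ i ∈ T, F.1 i ≠ D i) <;>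
          by_cases h3 : (∀ i ∈ U, F.1 i = D i) <;>
          simp [Finset.forall_mem_insert, h1, h2, h3]
      rw [hsplit, ih U hTU, ih (insert a U) hTU']
      by_cases hT : T = ∅ <;> simp [hT, Finset.insert_ne_empty]

/-- **Euler-characteristic identity for faces.** Let `𝒜` be a central hyperplane
arrangement, `D` a chamber, and `T ⊆ ι`.  For a face `F`, let
`M_D(F) = {i | F i ≠ D i}`.  Then `Σ_{F : T ⊆ M_D(F)} (−1)^{codim F}` equals `1` if
`T = ∅` and `0` otherwise. -/
theorem face_euler_identity {ι : Type*} [Fintype ι] [DecidableEq ι]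
    [FiniteDimensional ℝ E]
    (α : ι → (E →ₗ[ℝ] ℝ)) (hα : ∀ i, α i ≠ 0)
    (hker : ∀ i j, LinearMap.ker (α i) = LinearMap.ker (α j) → i = j)
    (D : ι → SignType) (hD : IsChamber α D) (T : Finset ι) :
    (∑ F : Face α,
        if T ⊆ Finset.univ.filter (fun i => F.1 i ≠ D i) then
          (-1 : ℤ) ^ codim α F.1 else 0) =
      if T = ∅ then 1 else 0 := by
  have h := keyA α D hD T ∅ (Finset.disjoint_empty_right T)
  rw [← h]
  apply Finset.sum_congr rfl
  intro F _
  refine if_congr ?_ rfl rfl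
  constructor
  · intro hsub
    exact ⟨fun i hi => (Finset.mem_filter.mp (hsub hi)).2,
      fun i hi => absurd hi (Finset.notMem_empty i)⟩
  · rintro ⟨h1, -⟩ i hi
    exact Finset.mem_filter.mpr ⟨Finset.mem_univ i, h1 i hi⟩
end
end

section
/- Let 𝒜 be a central hyperplane arrangement of rank 3 (the codimension in E of ⋂_{i ∈ ι} ker(α i) equals 3). Then there exist distinct indices i, j ∈ ι such that the codimension-2 subspace ker(α i) ∩ ker(α j) is contained in no other hyperplane of the arrangement: for every k ∈ ι, if ker(α i) ∩ ker(α j) ⊆ ker(α k) then k = i or k = j. Equivalently, there is a face F with codim F = 2 and #𝒜_F = 2, i.e. n₂ > 0. -/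
open Matrix

noncomputable section

variable {E : Type*} [AddCommGroup E] [Module ℝ E]

-- helpers

/-- 2x2 determinant of two plane vectors. -/
def sgd2 (u v : ℝ × ℝ) : ℝ := u.1 * v.2 - u.2 * v.1

/-- squared norm -/
def sgnsq (u : ℝ × ℝ) : ℝ := u.1 * u.1 + u.2 * u.2

lemma nsq_pos {u : ℝ × ℝ} (hu : u ≠ 0) : 0 < sgnsq u := by
  rcases u with ⟨a, b⟩
  have : a ≠ 0 ∨ b ≠ 0 := by
    by_contra h; push_neg at h; exact hu (by simp [Prod.ext_iff, h.1, h.2])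
  rcases this with h | h
  · have := mul_self_pos.2 h; unfold sgnsq; nlinarith [mul_self_nonneg b]
  · have := mul_self_pos.2 h; unfold sgnsq; nlinarith [mul_self_nonneg a]

lemma d2_ne_zero_left {u v : ℝ × ℝ} (h : sgd2 u v ≠ 0) : u ≠ 0 := by
  rintro rfl; exact h (by simp [sgd2])

lemma sgcollin {u v : ℝ × ℝ} (hu : u ≠ 0) (h : sgd2 u v = 0) : ∃ m : ℝ, v = m • u := by
  have hN : sgnsq u ≠ 0 := (nsq_pos hu).ne'
  refine ⟨(u.1 * v.1 + u.2 * v.2) / sgnsq u, ?_⟩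
  have h' : u.1 * v.2 - u.2 * v.1 = 0 := h
  have hn : u.1 * u.1 + u.2 * u.2 ≠ 0 := hN
  ext
  · show v.1 = _ * u.1
    field_simp [sgnsq]
    unfold sgnsq
    linear_combination (-u.2) * h'
  · show v.2 = _ * u.2
    field_simp [sgnsq]
    unfold sgnsq
    linear_combination u.1 * h'

lemma sg_exists_pair (r : Fin 3 → ℝ) (h01 : r 0 ≠ r 1) (h02 : r 0 ≠ r 2) (h12 : r 1 ≠ r 2) :
    ∃ a b : Fin 3, r a ≠ r b ∧ (r a) ^ 2 ≤ r a * r b := by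
  have main : ∀ x y : ℝ, x ≠ y → 0 ≤ x * y → (x ^ 2 ≤ x * y ∨ y ^ 2 ≤ y * x) := by
    intro x y hne hxy
    rcases le_total (x ^ 2) (y ^ 2) with h | h
    · left; nlinarith [sq_nonneg (x - y), sq_nonneg (x + y)]
    · right; nlinarith [sq_nonneg (x - y), sq_nonneg (x + y)]
  rcases le_or_gt 0 (r 0 * r 1) with h | h
  · rcases main _ _ h01 h with h' | h'
    · exact ⟨0, 1, h01, h'⟩
    · exact ⟨1, 0, h01.symm, by linarith [h']⟩
  · rcases le_or_gt 0 (r 0 * r 2) with h2 | h2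
    · rcases main _ _ h02 h2 with h' | h'
      · exact ⟨0, 2, h02, h'⟩
      · exact ⟨2, 0, h02.symm, h'⟩
    · have h3 : 0 ≤ r 1 * r 2 := by nlinarith [mul_pos_of_neg_of_neg h h2, sq_nonneg (r 0), mul_self_nonneg (r 0)]
      rcases main _ _ h12 h3 with h' | h'
      · exact ⟨1, 2, h12, h'⟩
      · exact ⟨2, 1, h12.symm, h'⟩

lemma sg_plane {ι : Type*} [Fintype ι] (p : ι → ℝ × ℝ)
    (h : ∃ t : ι × ι × ι, sgd2 (p t.2.1 - p t.1) (p t.2.2 - p t.1) ≠ 0) :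
    ∃ i j : ι, p i ≠ p j ∧
      ∀ k, sgd2 (p j - p i) (p k - p i) = 0 → p k = p i ∨ p k = p j := by
  classical
  set D : ι × ι × ι → ℝ := fun t =>
    (sgd2 (p t.2.1 - p t.1) (p t.2.2 - p t.1)) ^ 2 / sgnsq (p t.2.1 - p t.1) with hD
  set T : Finset (ι × ι × ι) :=
    Finset.univ.filter (fun t => sgd2 (p t.2.1 - p t.1) (p t.2.2 - p t.1) ≠ 0) with hT
  obtain ⟨t0, ht0⟩ := h
  have hTne : T.Nonempty := ⟨t0, by simp [hT, ht0]⟩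
  obtain ⟨⟨i, j, k⟩, hmem, hmin⟩ := T.exists_min_image D hTne
  have hd : sgd2 (p j - p i) (p k - p i) ≠ 0 := by
    simpa [hT] using hmem
  have hu : p j - p i ≠ 0 := d2_ne_zero_left hd
  have hij : p i ≠ p j := fun he => hu (by rw [he]; abel)
  refine ⟨i, j, hij, ?_⟩
  intro l hl
  by_contra hcon
  push_neg at hcon
  obtain ⟨hli, hlj⟩ := hcon
  set u : ℝ × ℝ := p j - p i with hudef
  obtain ⟨m, hm⟩ := sgcollin hu hl
  have hm0 : m ≠ 0 := by
    rintro rfl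
    rw [zero_smul] at hm
    exact hli (sub_eq_zero.mp hm)
  have hm1 : m ≠ 1 := by
    rintro rfl
    rw [one_smul, hudef] at hm
    exact hlj (sub_left_inj.mp hm)
  set q : ℝ × ℝ := p i - p k with hqdef
  set N : ℝ := sgnsq u with hN
  set P : ℝ := u.1 * q.1 + u.2 * q.2 with hP
  set d0 : ℝ := sgd2 q u with hd0
  have hNpos : 0 < N := nsq_pos hu
  have hd0' : sgd2 u (p k - p i) = d0 := by
    have : p k - p i = -q := by rw [hqdef]; abel
    rw [this]; simp [sgd2, hd0]; ring
  have hd0ne : d0 ≠ 0 := by rw [← hd0']; exact hd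
  -- the three parameters
  set sv : Fin 3 → ℝ := ![0, 1, m] with hsv
  set idx : Fin 3 → ι := ![i, j, l] with hidx
  have hpoint : ∀ t : Fin 3, p (idx t) = p i + sv t • u := by
    intro t
    fin_cases t
    · simp [hidx, hsv]
    · simp [hidx, hsv, hudef]
    · simp [hidx, hsv, ← hm]
  set r : Fin 3 → ℝ := fun t => P + sv t * N with hr
  have hrne : ∀ a b : Fin 3, sv a ≠ sv b → r a ≠ r b := by
    intro a b hab he
    apply hab
    have : sv a * N = sv b * N := by simpa [hr] using he
    exact mul_right_cancel₀ hNpos.ne' this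
  obtain ⟨a, b, hab, hXY⟩ := sg_exists_pair r
    (hrne 0 1 (by simp [hsv])) (hrne 0 2 (by simp [hsv, Ne.symm hm0]))
    (hrne 1 2 (by simp [hsv, Ne.symm hm1]))
  have hsab : sv a ≠ sv b := by
    intro he; exact hab (by simp [hr, he])
  -- the new triple
  set A : ι := idx a with hA
  set B : ι := idx b with hB
  have hBk : p B - p k = (q.1 + sv b * u.1, q.2 + sv b * u.2) := by
    rw [hB, hpoint b]; ext <;> simp [hqdef] <;> ring
  have hAk : p A - p k = (q.1 + sv a * u.1, q.2 + sv a * u.2) := by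
    rw [hA, hpoint a]; ext <;> simp [hqdef] <;> ring
  have hv' : sgd2 (p B - p k) (p A - p k) = (sv a - sv b) * d0 := by
    rw [hBk, hAk]; simp [sgd2, hd0]; ring
  have hv'ne : sgd2 (p B - p k) (p A - p k) ≠ 0 :=
    by rw [hv']; exact mul_ne_zero (sub_ne_zero.mpr hsab) hd0ne
  have hmem' : (k, B, A) ∈ T := by simp [hT]; exact hv'ne
  have hR : sgnsq (p B - p k) = (q.1 + sv b * u.1) * (q.1 + sv b * u.1)
      + (q.2 + sv b * u.2) * (q.2 + sv b * u.2) := by rw [hBk]; rfl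
  have hRpos : 0 < sgnsq (p B - p k) := nsq_pos (d2_ne_zero_left hv'ne)
  -- Lagrange identity
  have hNR : N * sgnsq (p B - p k) = d0 ^ 2 + (r b) ^ 2 := by
    rw [hR, hr]; simp only [hN, hP, hd0, sgnsq, sgd2]; ring
  have hlt : D (k, B, A) < D (i, j, k) := by
    simp only [hD]
    rw [div_lt_div_iff₀ hRpos (by rw [← hudef] at *; exact hNpos)]
    rw [← hudef, hv', hd0']
    rw [← mul_lt_mul_iff_right₀ hNpos, ← mul_assoc, ← mul_assoc]
    calc N * ((sv a - sv b) * d0) ^ 2 * N = ((r a - r b) * d0) ^ 2 := by rw [hr]; ring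
    _ < d0 ^ 2 * (d0 ^ 2 + (r b) ^ 2) := by
        nlinarith [mul_nonneg (sq_nonneg d0) (sub_nonneg.2 hXY),
          mul_pos (show (0:ℝ) < d0 ^ 2 by positivity) (show (0:ℝ) < d0 ^ 2 by positivity),
          mul_nonneg (sq_nonneg d0) (sq_nonneg (r a))]
    _ = d0 ^ 2 * (N * sgnsq (p B - p k)) := by rw [hNR]
    _ = N * d0 ^ 2 * sgnsq (p B - p k) := by ring
  exact absurd (hmin (k, B, A) hmem') (not_le.mpr hlt)



/-- Separating points for a finite-dimensional space of functionals. -/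
lemma sgsep_aux [FiniteDimensional ℝ E] (n : ℕ) :
    ∀ U : Submodule ℝ (Module.Dual ℝ E), Module.finrank ℝ U ≤ n →
    ∃ ys : Fin n → E, ∀ f ∈ U, (∀ t, f (ys t) = 0) → f = 0 := by
  induction n with
  | zero =>
    intro U hU
    have : U = ⊥ := by
      rw [← Submodule.finrank_eq_zero (S := U)]
      omega
    exact ⟨![], fun f hf _ => by rw [this] at hf; simpa using hf⟩
  | succ n ih =>
    intro U hU
    by_cases hbot : U = ⊥
    · exact ⟨fun _ => 0, fun f hf _ => by rw [hbot] at hf; simpa using hf⟩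
    · obtain ⟨f0, hf0U, hf00⟩ := (Submodule.ne_bot_iff U).mp hbot
      have : ∃ y : E, f0 y ≠ 0 := by
        by_contra hy
        push_neg at hy
        exact hf00 (LinearMap.ext fun y => hy y)
      obtain ⟨y, hy⟩ := this
      set U' := U ⊓ LinearMap.ker (Module.Dual.eval ℝ E y) with hU'
      have hlt : U' < U := by
        refine lt_of_le_of_ne inf_le_left (fun he => ?_)
        have : f0 ∈ U' := he ▸ hf0U
        rw [hU', Submodule.mem_inf, LinearMap.mem_ker] at this
        exact hy (by simpa [Module.Dual.eval_apply] using this.2)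
      have hrk : Module.finrank ℝ U' < Module.finrank ℝ U :=
        Submodule.finrank_lt_finrank_of_lt hlt
      obtain ⟨ys', hys'⟩ := ih U' (by omega)
      refine ⟨Fin.cons y ys', fun f hf hz => ?_⟩
      refine hys' f ?_ (fun t => by simpa using hz t.succ)
      rw [hU', Submodule.mem_inf, LinearMap.mem_ker]
      refine ⟨hf, ?_⟩
      have := hz 0
      simpa [Module.Dual.eval_apply] using this

/-- Duality: a functional vanishing on the intersection of two kernels is in their span. -/
lemma sg_mem_span_pair_of_ker [FiniteDimensional ℝ E] (f g h : Module.Dual ℝ E)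
    (hle : LinearMap.ker f ⊓ LinearMap.ker g ≤ LinearMap.ker h) :
    h ∈ Submodule.span ℝ {f, g} := by
  rw [← Subspace.dualCoannihilator_dualAnnihilator_eq (W := Submodule.span ℝ {f, g})]
  rw [Submodule.mem_dualAnnihilator]
  intro w hw
  have hw' : w ∈ (↑(Submodule.span ℝ ({f, g} : Set (Module.Dual ℝ E))).dualCoannihilator : Set E) := hw
  rw [Submodule.coe_dualCoannihilator_span] at hw'
  have hwf : f w = 0 := hw' f (by simp)
  have hwg : g w = 0 := hw' g (by simp)
  exact hle (Submodule.mem_inf.mpr ⟨LinearMap.mem_ker.mpr hwf, LinearMap.mem_ker.mpr hwg⟩)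

/-- rank = dim of span of the forms -/
lemma sg_finrank_span_eq_arrRank {ι : Type*} [FiniteDimensional ℝ E] (α : ι → (E →ₗ[ℝ] ℝ)) :
    Module.finrank ℝ (Submodule.span ℝ (Set.range α)) =
      Module.finrank ℝ E - Module.finrank ℝ (⨅ i, LinearMap.ker (α i) : Submodule ℝ E) := by
  have hco : (Submodule.span ℝ (Set.range α)).dualCoannihilator
      = (⨅ i, LinearMap.ker (α i) : Submodule ℝ E) := by
    apply Submodule.ext
    intro x
    constructor
    · intro hx
      have hx' : x ∈ (↑(Submodule.span ℝ (Set.range α)).dualCoannihilator : Set E) := hx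
      rw [Submodule.coe_dualCoannihilator_span] at hx'
      exact Submodule.mem_iInf _ |>.mpr fun i => LinearMap.mem_ker.mpr (hx' (α i) ⟨i, rfl⟩)
    · intro hx
      show x ∈ (↑(Submodule.span ℝ (Set.range α)).dualCoannihilator : Set E)
      rw [Submodule.coe_dualCoannihilator_span]
      rintro f ⟨i, rfl⟩
      exact LinearMap.mem_ker.mp (Submodule.mem_iInf _ |>.mp hx i)
  have := Subspace.finrank_add_finrank_dualCoannihilator_eq (Submodule.span ℝ (Set.range α))
  rw [hco] at this
  exact Nat.eq_sub_of_add_eq this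

lemma sg_exists_indep_triple {ι : Type*} [FiniteDimensional ℝ E] (α : ι → Module.Dual ℝ E)
    (h3 : Module.finrank ℝ (Submodule.span ℝ (Set.range α)) = 3) :
    ∃ i j k : ι, LinearIndependent ℝ ![α i, α j, α k] := by
  classical
  obtain ⟨b, hbsub, hbspan, hbind⟩ := exists_linearIndependent ℝ (Set.range α)
  have hbfin : b.Finite := hbind.setFinite
  haveI := hbfin.fintype
  have hcard : b.toFinset.card = 3 := by
    rw [← finrank_span_set_eq_card hbind, hbspan, h3]
  obtain ⟨x, y, z, hxy, hxz, hyz, hset⟩ := Finset.card_eq_three.mp hcard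
  have hx : x ∈ b := by rw [← Set.mem_toFinset, hset]; simp
  have hy : y ∈ b := by rw [← Set.mem_toFinset, hset]; simp
  have hz : z ∈ b := by rw [← Set.mem_toFinset, hset]; simp
  obtain ⟨i, hi⟩ := hbsub hx
  obtain ⟨j, hj⟩ := hbsub hy
  obtain ⟨k, hk⟩ := hbsub hz
  refine ⟨i, j, k, ?_⟩
  have hind : LinearIndependent ℝ ![x, y, z] := by
    have hg : Function.Injective (![⟨x, hx⟩, ⟨y, hy⟩, ⟨z, hz⟩] : Fin 3 → ↥b) := by
      intro s t hst
      fin_cases s <;> fin_cases t <;> simp_all [Subtype.ext_iff] <;>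
        first | rfl | exact absurd hst (by assumption) |
          exact absurd hst.symm (by assumption)
    have := hbind.comp _ hg
    have he : (Subtype.val ∘ (![⟨x, hx⟩, ⟨y, hy⟩, ⟨z, hz⟩] : Fin 3 → ↥b)) = ![x, y, z] := by
      funext t; fin_cases t <;> rfl
    rwa [he] at this
  rw [hi, hj, hk]
  exact hind

lemma sgdet3_ratio (ci ai bi cj aj bj ck ak bk : ℝ) (hci : ci ≠ 0) (hcj : cj ≠ 0)
    (hck : ck ≠ 0) :
    sgd2 ((aj / cj, bj / cj) - (ai / ci, bi / ci)) ((ak / ck, bk / ck) - (ai / ci, bi / ci))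
      = (ci * aj * bk - ci * bj * ak - ai * cj * bk + ai * bj * ck + bi * cj * ak - bi * aj * ck)
        / (ci * cj * ck) := by
  simp only [sgd2, Prod.fst_sub, Prod.snd_sub]
  field_simp
  ring

/-- **A rank-3 arrangement has a codimension-2 flat lying on exactly two hyperplanes.**
Let `𝒜` be a central hyperplane arrangement of rank `3`.  Then there exist distinct
indices `i, j` such that the subspace `ker(α i) ∩ ker(α j)` is contained in no other
hyperplane of the arrangement, i.e. `n₂ > 0`. -/

theorem exists_simple_codim_two {ι : Type*} [Fintype ι] [FiniteDimensional ℝ E]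
    (α : ι → (E →ₗ[ℝ] ℝ)) (hα : ∀ i, α i ≠ 0)
    (hker : ∀ i j, LinearMap.ker (α i) = LinearMap.ker (α j) → i = j)
    (hrank : arrRank α = 3) :
    ∃ i j : ι, i ≠ j ∧ ∀ k : ι,
      LinearMap.ker (α i) ⊓ LinearMap.ker (α j) ≤ LinearMap.ker (α k) →
        k = i ∨ k = j := by
  classical
  have hW3 : Module.finrank ℝ (Submodule.span ℝ (Set.range α)) = 3 := by
    rw [sg_finrank_span_eq_arrRank α]; exact hrank
  obtain ⟨i1, i2, i3, hindep⟩ := sg_exists_indep_triple α hW3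
  have hx0 : ∃ x0 : E, ∀ i, α i x0 ≠ 0 := by
    by_contra hc
    push_neg at hc
    have hcover : ⋃ i, ((LinearMap.ker (α i) : Submodule ℝ E) : Set E) = Set.univ := by
      ext x
      simp only [Set.mem_iUnion, SetLike.mem_coe, LinearMap.mem_ker, Set.mem_univ, iff_true]
      exact hc x
    obtain ⟨i, hi⟩ := Subspace.exists_eq_top_of_iUnion_eq_univ hcover
    exact hα i (LinearMap.ker_eq_top.mp hi)
  obtain ⟨x0, hx0⟩ := hx0
  set W : Submodule ℝ (Module.Dual ℝ E) := Submodule.span ℝ (Set.range α) with hWdef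
  have hWmem : ∀ i, (α i : Module.Dual ℝ E) ∈ W := fun i => Submodule.subset_span ⟨i, rfl⟩
  set K : Submodule ℝ (Module.Dual ℝ E) :=
    W ⊓ LinearMap.ker (Module.Dual.eval ℝ E x0) with hK
  have hKlt : K < W := by
    refine lt_of_le_of_ne inf_le_left (fun he => ?_)
    have hmem : (α i1 : Module.Dual ℝ E) ∈ K := he ▸ hWmem i1
    rw [hK, Submodule.mem_inf, LinearMap.mem_ker] at hmem
    exact hx0 i1 (by simpa [Module.Dual.eval_apply] using hmem.2)
  have hKrk : Module.finrank ℝ K ≤ 2 := by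
    have := Submodule.finrank_lt_finrank_of_lt hKlt
    rw [hW3] at this
    omega
  obtain ⟨ys, hsep0⟩ := sgsep_aux 2 K hKrk
  have hsep : ∀ f, f ∈ W → f x0 = 0 → f (ys 0) = 0 → f (ys 1) = 0 → f = 0 := by
    intro f hf h0 h1 h2
    refine hsep0 f ?_ (fun t => by fin_cases t <;> assumption)
    rw [hK, Submodule.mem_inf, LinearMap.mem_ker]
    exact ⟨hf, by simpa [Module.Dual.eval_apply] using h0⟩
  set c : ι → ℝ := fun i => α i x0 with hc
  set a : ι → ℝ := fun i => α i (ys 0) with ha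
  set b : ι → ℝ := fun i => α i (ys 1) with hb
  set p : ι → ℝ × ℝ := fun i => (a i / c i, b i / c i) with hp
  set D3 : ι → ι → ι → ℝ := fun r s t =>
    c r * a s * b t - c r * b s * a t - a r * c s * b t + a r * b s * c t
      + b r * c s * a t - b r * a s * c t with hD3
  have hd2D3 : ∀ r s t : ι, sgd2 (p s - p r) (p t - p r) = D3 r s t / (c r * c s * c t) :=
    fun r s t => sgdet3_ratio (c r) (a r) (b r) (c s) (a s) (b s) (c t) (a t) (b t)
      (hx0 r) (hx0 s) (hx0 t)
  -- injectivity of p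
  have hinj : ∀ s t : ι, p s = p t → s = t := by
    intro s t hst
    rw [Prod.ext_iff] at hst
    have e1 : a s * c t = a t * c s := by
      have := hst.1
      simp only [hp] at this
      rw [div_eq_div_iff (hx0 s) (hx0 t)] at this
      linarith [this]
    have e2 : b s * c t = b t * c s := by
      have := hst.2
      simp only [hp] at this
      rw [div_eq_div_iff (hx0 s) (hx0 t)] at this
      linarith [this]
    have hg : (c t • (α s : Module.Dual ℝ E) - c s • (α t : Module.Dual ℝ E)) = 0 := by
      refine hsep _ (Submodule.sub_mem _ (Submodule.smul_mem _ _ (hWmem s))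
        (Submodule.smul_mem _ _ (hWmem t))) ?_ ?_ ?_ <;>
        simp only [LinearMap.sub_apply, LinearMap.smul_apply, smul_eq_mul]
      · show c t * c s - c s * c t = 0; ring
      · show c t * a s - c s * a t = 0; linarith [e1]
      · show c t * b s - c s * b t = 0; linarith [e2]
    have hsmul : c t • (α s : Module.Dual ℝ E) = c s • (α t) := by
      have := sub_eq_zero.mp hg; exact this
    have hkereq : LinearMap.ker (α s) = LinearMap.ker (α t) := by
      rw [← LinearMap.ker_smul (α s) (c t) (hx0 t), hsmul, LinearMap.ker_smul (α t) (c s) (hx0 s)]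
    exact hker s t hkereq
  -- span membership kills D3
  have hspanD3 : ∀ r s t : ι, (α t : Module.Dual ℝ E) ∈ Submodule.span ℝ {(α r : Module.Dual ℝ E), α s} →
      D3 r s t = 0 := by
    intro r s t hmem
    obtain ⟨u, v, huv⟩ := Submodule.mem_span_pair.mp hmem
    have e1 : c t = u * c r + v * c s := by
      rw [hc]; simp only; rw [← huv]; simp [smul_eq_mul]
    have e2 : a t = u * a r + v * a s := by
      rw [ha]; simp only; rw [← huv]; simp [smul_eq_mul]
    have e3 : b t = u * b r + v * b s := by
      rw [hb]; simp only; rw [← huv]; simp [smul_eq_mul]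
    rw [hD3]
    simp only
    linear_combination (a r * b s - b r * a s) * e1 + (b r * c s - c r * b s) * e2
      + (c r * a s - a r * c s) * e3
  -- the independent triple has nonzero D3
  have hD3ne : D3 i1 i2 i3 ≠ 0 := by
    set v : Fin 3 → Module.Dual ℝ E := ![α i1, α i2, α i3] with hv
    set pts : Fin 3 → E := ![x0, ys 0, ys 1] with hpts
    set φ : Module.Dual ℝ E →ₗ[ℝ] (Fin 3 → ℝ) :=
      LinearMap.pi (fun t => Module.Dual.eval ℝ E (pts t)) with hφ
    have hφapp : ∀ (f : Module.Dual ℝ E) (t : Fin 3), φ f t = f (pts t) := by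
      intro f t; rw [hφ]; simp [LinearMap.pi_apply, Module.Dual.eval_apply]
    have hdisj : Disjoint (Submodule.span ℝ (Set.range v)) (LinearMap.ker φ) := by
      rw [Submodule.disjoint_def]
      intro f hf hkf
      have hfW : f ∈ W := by
        refine Submodule.span_le.mpr ?_ hf
        rintro _ ⟨t, rfl⟩
        fin_cases t <;> simp [hv] <;> exact hWmem _
      have h0 : φ f = 0 := LinearMap.mem_ker.mp hkf
      refine hsep f hfW ?_ ?_ ?_
      · have := congrFun h0 0; rw [hφapp] at this; simpa [hpts] using this
      · have := congrFun h0 1; rw [hφapp] at this; simpa [hpts] using this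
      · have := congrFun h0 2; rw [hφapp] at this; simpa [hpts] using this
    have hrows : LinearIndependent ℝ (fun r : Fin 3 => (⇑φ ∘ v) r) := hindep.map hdisj
    set M : Matrix (Fin 3) (Fin 3) ℝ := Matrix.of (fun r t => φ (v r) t) with hM
    have hrows' : LinearIndependent ℝ (fun r : Fin 3 => M r) := hrows
    have hunit : IsUnit M := Matrix.linearIndependent_rows_iff_isUnit.mp hrows'
    have hdet : M.det ≠ 0 := by
      have := (Matrix.isUnit_iff_isUnit_det M).mp hunit
      exact this.ne_zero
    have hMval : ∀ r t : Fin 3, M r t = v r (pts t) := fun r t => hφapp (v r) t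
    have : M.det = D3 i1 i2 i3 := by
      rw [Matrix.det_fin_three, hMval, hMval, hMval, hMval, hMval, hMval, hMval, hMval, hMval]
      simp only [hv, hpts, hD3, hc, ha, hb, Matrix.cons_val_zero, Matrix.cons_val_one,
        Matrix.head_cons, Matrix.cons_val_two, Matrix.tail_cons]
    rwa [this] at hdet
  -- apply Sylvester–Gallai in the plane
  have hsgh : ∃ t : ι × ι × ι, sgd2 (p t.2.1 - p t.1) (p t.2.2 - p t.1) ≠ 0 := by
    refine ⟨(i1, i2, i3), ?_⟩
    rw [hd2D3]
    exact div_ne_zero hD3ne (mul_ne_zero (mul_ne_zero (hx0 i1) (hx0 i2)) (hx0 i3))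
  obtain ⟨I, J, hIJ, hline⟩ := sg_plane p hsgh
  refine ⟨I, J, fun he => hIJ (by rw [he]), ?_⟩
  intro k hk
  have hmem : (α k : Module.Dual ℝ E) ∈ Submodule.span ℝ {(α I : Module.Dual ℝ E), α J} :=
    sg_mem_span_pair_of_ker (α I) (α J) (α k) hk
  have hd20 : sgd2 (p J - p I) (p k - p I) = 0 := by
    rw [hd2D3, hspanD3 I J k hmem, zero_div]
  rcases hline k hd20 with h | h
  · exact Or.inl (hinj k I h)
  · exact Or.inr (hinj k J h)

end
end
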